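/- arXiv:2409.11633 — 5 statements merged into one kernel-verified Lean document; each statement's English description precedes it below -/
import Mathlib

section
/- Let T > 0 and let P^T : [0,T] → 𝕊ⁿ be differentiable with R + DᵀP^T(t)D positive definite for all t, satisfying the differential Riccati equation Ṗ^T(t) + P^T(t)A + AᵀP^T(t) + CᵀP^T(t)C + Q − [P^T(t)B + CᵀP^T(t)D + Sᵀ][R + DᵀP^T(t)D]⁻¹[BᵀP^T(t) + DᵀP^T(t)C + S] = 0 on [0,T] with P^T(T) = 0. Let Θ^T(t) = −[R + DᵀP^T(t)D]⁻¹[BᵀP^T(t) + DᵀP^T(t)C + S], and let p^T : [0,T] → ℝⁿ be differentiable with ṗ^T(t) + [A + BΘ^T(t)]ᵀp^T(t) + [C + DΘ^T(t)]ᵀP^T(t)σ + P^T(t)b + q + Θ^T(t)ᵀr = 0 and p^T(T) = 0. Define p₀^T(t) = ∫_t^T (⟨P^T(s)σ,σ⟩ + 2⟨p^T(s),b⟩ − ⟨[R + DᵀP^T(s)D]⁻¹η(s), η(s)⟩) ds with η(s) = Bᵀp^T(s) + DᵀP^T(s)σ + r, and set V^T(t,x) = (1/2)(⟨P^T(t)x,x⟩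 + 2⟨p^T(t),x⟩ + p₀^T(t)). Then V^T is a classical solution of the HJB equation: for all (t,x) ∈ [0,T] × ℝⁿ, ∂_t V^T(t,x) + H(x, P^T(t)x + p^T(t), P^T(t)) = 0, and V^T(T,x) = 0 for all x ∈ ℝⁿ. -/
open Matrix Set

attribute [local instance] Matrix.normedAddCommGroup Matrix.normedSpace

lemma dpmv {k l : ℕ} (M : Matrix (Fin k) (Fin l) ℝ) (a : Fin l → ℝ) (b : Fin k → ℝ) :
    (M *ᵥ a) ⬝ᵥ b = a ⬝ᵥ (Mᵀ *ᵥ b) := by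
  rw [dotProduct_comm, Matrix.dotProduct_mulVec, ← Matrix.mulVec_transpose]
  exact dotProduct_comm _ _

lemma quadnn {m : ℕ} {K : Matrix (Fin m) (Fin m) ℝ} (hK : K.PosDef) (v : Fin m → ℝ) :
    0 ≤ (K *ᵥ v) ⬝ᵥ v := by
  rw [dotProduct_comm]
  simpa using hK.posSemidef.dotProduct_mulVec_nonneg v

lemma quad_inf {m : ℕ} (K : Matrix (Fin m) (Fin m) ℝ) (hK : K.PosDef) (hKs : K.IsSymm)
    (f : (Fin m → ℝ) → ℝ) (l : Fin m → ℝ) (c : ℝ)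
    (hf : ∀ u, f u = (1/2) * ((K *ᵥ u) ⬝ᵥ u) + l ⬝ᵥ u + c) :
    (⨅ u, f u) = c - (1/2) * ((K⁻¹ *ᵥ l) ⬝ᵥ l) := by
  have hdet : IsUnit K.det := isUnit_iff_ne_zero.2 hK.det_pos.ne'
  set w : Fin m → ℝ := K⁻¹ *ᵥ l with hw
  have hKw : K *ᵥ w = l := by
    rw [hw, Matrix.mulVec_mulVec, Matrix.mul_nonsing_inv _ hdet, Matrix.one_mulVec]
  have hwl : (K⁻¹ *ᵥ l) ⬝ᵥ l = w ⬝ᵥ l := rfl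
  have key : ∀ u, f u = (c - (1/2) * (w ⬝ᵥ l)) + (1/2) * ((K *ᵥ (u + w)) ⬝ᵥ (u + w)) := by
    intro u
    have h1 : (K *ᵥ u) ⬝ᵥ w = l ⬝ᵥ u := by
      rw [dpmv, hKs.eq, hKw, dotProduct_comm]
    have h2 : (K *ᵥ w) ⬝ᵥ u = l ⬝ᵥ u := by rw [hKw]
    have h3 : (K *ᵥ w) ⬝ᵥ w = l ⬝ᵥ w := by rw [hKw]
    have h4 : w ⬝ᵥ l = l ⬝ᵥ w := dotProduct_comm _ _
    rw [hf u]
    simp only [Matrix.mulVec_add, add_dotProduct, dotProduct_add, h1, h2, h3, h4]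
    ring
  rw [hwl]
  apply le_antisymm
  · refine le_trans (ciInf_le ⟨c - (1/2) * (w ⬝ᵥ l), ?_⟩ (-w)) ?_
    · rintro y ⟨u, rfl⟩
      simp only []
      rw [key u]
      have := quadnn hK (u + w)
      linarith
    · rw [key (-w)]
      simp
  · exact le_ciInf fun u => by rw [key u]; have := quadnn hK (u + w); linarith

lemma contOn_entry {k l : ℕ} {M : ℝ → Matrix (Fin k) (Fin l) ℝ} {s : Set ℝ}
    (hM : ContinuousOn M s) (i : Fin k) (j : Fin l) :
    ContinuousOn (fun t => M t i j) s := by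
  have h : Continuous fun (A : Matrix (Fin k) (Fin l) ℝ) => A i j :=
    (continuous_apply j).comp (continuous_apply i)
  exact fun x hx => (h.continuousAt).comp_continuousWithinAt (hM x hx)

lemma contOn_ventry {l : ℕ} {v : ℝ → Fin l → ℝ} {s : Set ℝ}
    (hv : ContinuousOn v s) (j : Fin l) : ContinuousOn (fun t => v t j) s :=
  fun x hx => ((continuous_apply j).continuousAt).comp_continuousWithinAt (hv x hx)

lemma contOn_mulVec {k l : ℕ} {M : ℝ → Matrix (Fin k) (Fin l) ℝ} {v : ℝ → Fin l → ℝ} {s : Set ℝ}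
    (hM : ContinuousOn M s) (hv : ContinuousOn v s) :
    ContinuousOn (fun t => M t *ᵥ v t) s := by
  apply continuousOn_pi.2; intro i
  simp only [Matrix.mulVec, dotProduct]
  exact continuousOn_finset_sum _ fun j _ => (contOn_entry hM i j).mul (contOn_ventry hv j)

lemma contOn_dot {k : ℕ} {v w : ℝ → Fin k → ℝ} {s : Set ℝ}
    (hv : ContinuousOn v s) (hw : ContinuousOn w s) :
    ContinuousOn (fun t => v t ⬝ᵥ w t) s := by
  simp only [dotProduct]
  exact continuousOn_finset_sum _ fun j _ => (contOn_ventry hv j).mul (contOn_ventry hw j)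

lemma contOn_matmul {k l o : ℕ} {M : ℝ → Matrix (Fin k) (Fin l) ℝ}
    {N : ℝ → Matrix (Fin l) (Fin o) ℝ} {s : Set ℝ}
    (hM : ContinuousOn M s) (hN : ContinuousOn N s) :
    ContinuousOn (fun t => M t * N t) s := by
  apply continuousOn_pi.2; intro i
  apply continuousOn_pi.2; intro j
  simp only [Matrix.mul_apply]
  exact continuousOn_finset_sum _ fun o _ => (contOn_entry hM i o).mul (contOn_entry hN o j)

lemma contOn_det {k : ℕ} {M : ℝ → Matrix (Fin k) (Fin k) ℝ} {s : Set ℝ}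
    (hM : ContinuousOn M s) : ContinuousOn (fun t => (M t).det) s := by
  simp only [Matrix.det_apply]
  refine continuousOn_finset_sum _ fun p _ => ContinuousOn.zsmul ?_ _
  exact continuousOn_finset_prod _ fun i _ => contOn_entry hM (p i) i

lemma contOn_adjugate {k : ℕ} {M : ℝ → Matrix (Fin k) (Fin k) ℝ} {s : Set ℝ}
    (hM : ContinuousOn M s) : ContinuousOn (fun t => (M t).adjugate) s := by
  apply continuousOn_pi.2; intro i
  apply continuousOn_pi.2; intro j
  simp only [Matrix.adjugate_apply]
  apply contOn_det
  apply continuousOn_pi.2; intro a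
  apply continuousOn_pi.2; intro c
  by_cases h : a = j
  · simpa [Matrix.updateRow_apply, h] using continuousOn_const
  · simpa [Matrix.updateRow_apply, h] using contOn_entry hM a c

lemma contOn_inv {k : ℕ} {M : ℝ → Matrix (Fin k) (Fin k) ℝ} {s : Set ℝ}
    (hM : ContinuousOn M s) (hdet : ∀ t ∈ s, (M t).det ≠ 0) :
    ContinuousOn (fun t => (M t)⁻¹) s := by
  have h1 : ContinuousOn (fun t => ((M t).det)⁻¹ • (M t).adjugate) s :=
    ((contOn_det hM).inv₀ hdet).smul (contOn_adjugate hM)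
  exact h1.congr fun t _ => by rw [Matrix.inv_def, Ring.inverse_eq_inv]


/-- The Hamiltonian `ℍ(x, 𝐩, 𝐏, u)` of the stochastic LQ problem. -/
noncomputable def Ham {n m : ℕ}
    (A C : Matrix (Fin n) (Fin n) ℝ) (B D : Matrix (Fin n) (Fin m) ℝ)
    (b σ q : Fin n → ℝ) (r : Fin m → ℝ)
    (Q : Matrix (Fin n) (Fin n) ℝ) (S : Matrix (Fin m) (Fin n) ℝ)
    (R : Matrix (Fin m) (Fin m) ℝ)
    (x p : Fin n → ℝ) (P : Matrix (Fin n) (Fin n) ℝ) (u : Fin m → ℝ) : ℝ :=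
  (A *ᵥ x + B *ᵥ u + b) ⬝ᵥ p
    + (1 / 2) * ((P *ᵥ (C *ᵥ x + D *ᵥ u + σ)) ⬝ᵥ (C *ᵥ x + D *ᵥ u + σ))
    + (1 / 2) * ((Q *ᵥ x) ⬝ᵥ x + 2 * ((S *ᵥ x) ⬝ᵥ u) + (R *ᵥ u) ⬝ᵥ u
        + 2 * (q ⬝ᵥ x) + 2 * (r ⬝ᵥ u))

/-- `H(x,𝐩,𝐏) = inf_u ℍ(x,𝐩,𝐏,u)`. -/
noncomputable def Hinf {n m : ℕ}
    (A C : Matrix (Fin n) (Fin n) ℝ) (B D : Matrix (Fin n) (Fin m) ℝ)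
    (b σ q : Fin n → ℝ) (r : Fin m → ℝ)
    (Q : Matrix (Fin n) (Fin n) ℝ) (S : Matrix (Fin m) (Fin n) ℝ)
    (R : Matrix (Fin m) (Fin m) ℝ)
    (x p : Fin n → ℝ) (P : Matrix (Fin n) (Fin n) ℝ) : ℝ :=
  ⨅ u : Fin m → ℝ, Ham A C B D b σ q r Q S R x p P u

lemma ham_eq {n m : ℕ}
    (A C : Matrix (Fin n) (Fin n) ℝ) (B D : Matrix (Fin n) (Fin m) ℝ)
    (b σ q : Fin n → ℝ) (r : Fin m → ℝ)
    (Q : Matrix (Fin n) (Fin n) ℝ) (S : Matrix (Fin m) (Fin n) ℝ)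
    (R : Matrix (Fin m) (Fin m) ℝ)
    (P : Matrix (Fin n) (Fin n) ℝ) (hPs : P.IsSymm)
    (x pp : Fin n → ℝ) (u : Fin m → ℝ) :
    Ham A C B D b σ q r Q S R x pp P u
      = (1/2) * (((R + Dᵀ * P * D) *ᵥ u) ⬝ᵥ u)
        + (Bᵀ *ᵥ pp + Dᵀ *ᵥ (P *ᵥ (C *ᵥ x + σ)) + S *ᵥ x + r) ⬝ᵥ u
        + ((A *ᵥ x + b) ⬝ᵥ pp
          + (1/2) * ((P *ᵥ (C *ᵥ x + σ)) ⬝ᵥ (C *ᵥ x + σ))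
          + (1/2) * ((Q *ᵥ x) ⬝ᵥ x + 2 * (q ⬝ᵥ x))) := by
  rw [Ham]
  simp only [Matrix.mulVec_add, Matrix.add_mulVec, dotProduct_add, add_dotProduct,
    ← Matrix.mulVec_mulVec]
  have k1 : (B *ᵥ u) ⬝ᵥ pp = (Bᵀ *ᵥ pp) ⬝ᵥ u := by
    rw [dpmv B]; exact dotProduct_comm _ _
  have k2 : (P *ᵥ (D *ᵥ u)) ⬝ᵥ (C *ᵥ x) = (Dᵀ *ᵥ (P *ᵥ (C *ᵥ x))) ⬝ᵥ u := by
    rw [dpmv P, hPs.eq, dpmv D]; exact dotProduct_comm _ _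
  have k3 : (P *ᵥ (C *ᵥ x)) ⬝ᵥ (D *ᵥ u) = (Dᵀ *ᵥ (P *ᵥ (C *ᵥ x))) ⬝ᵥ u := by
    rw [dotProduct_comm (P *ᵥ (C *ᵥ x)) (D *ᵥ u), dpmv D]; exact dotProduct_comm _ _
  have k4 : (P *ᵥ (D *ᵥ u)) ⬝ᵥ (D *ᵥ u) = (Dᵀ *ᵥ (P *ᵥ (D *ᵥ u))) ⬝ᵥ u := by
    rw [dpmv Dᵀ, Matrix.transpose_transpose]
  have k5 : (P *ᵥ (D *ᵥ u)) ⬝ᵥ σ = (Dᵀ *ᵥ (P *ᵥ σ)) ⬝ᵥ u := by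
    rw [dpmv P, hPs.eq, dpmv D]; exact dotProduct_comm _ _
  have k6 : (P *ᵥ σ) ⬝ᵥ (D *ᵥ u) = (Dᵀ *ᵥ (P *ᵥ σ)) ⬝ᵥ u := by
    rw [dotProduct_comm (P *ᵥ σ) (D *ᵥ u), dpmv D]; exact dotProduct_comm _ _
  rw [k1, k2, k3, k4, k5, k6]
  ring

lemma hval_aux {n m : ℕ}
    (A C : Matrix (Fin n) (Fin n) ℝ) (B D : Matrix (Fin n) (Fin m) ℝ)
    (b σ q : Fin n → ℝ) (r : Fin m → ℝ)
    (Q : Matrix (Fin n) (Fin n) ℝ) (S : Matrix (Fin m) (Fin n) ℝ)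
    (R : Matrix (Fin m) (Fin m) ℝ)
    (P P' : Matrix (Fin n) (Fin n) ℝ) (hPs : P.IsSymm)
    (hKs : (R + Dᵀ * P * D).IsSymm)
    (p p' : Fin n → ℝ) (x : Fin n → ℝ)
    (hP' : P' = (P * B + Cᵀ * P * D + Sᵀ) * (R + Dᵀ * P * D)⁻¹ * (Bᵀ * P + Dᵀ * P * C + S)
      - (P * A + Aᵀ * P + Cᵀ * P * C + Q))
    (Θ : Matrix (Fin m) (Fin n) ℝ)
    (hΘ : Θ = -((R + Dᵀ * P * D)⁻¹ * (Bᵀ * P + Dᵀ * P * C + S)))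
    (hp' : p' = -((A + B * Θ)ᵀ *ᵥ p + (C + D * Θ)ᵀ *ᵥ (P *ᵥ σ) + P *ᵥ b + q + Θᵀ *ᵥ r))
    (η : Fin m → ℝ) (hη : η = Bᵀ *ᵥ p + Dᵀ *ᵥ (P *ᵥ σ) + r) :
    (1:ℝ)/2 * ((P' *ᵥ x) ⬝ᵥ x + 2 * (p' ⬝ᵥ x)
        + -((P *ᵥ σ) ⬝ᵥ σ + 2 * (p ⬝ᵥ b) - ((R + Dᵀ * P * D)⁻¹ *ᵥ η) ⬝ᵥ η))
      = -(((A *ᵥ x + b) ⬝ᵥ (P *ᵥ x + p)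
          + (1/2) * ((P *ᵥ (C *ᵥ x + σ)) ⬝ᵥ (C *ᵥ x + σ))
          + (1/2) * ((Q *ᵥ x) ⬝ᵥ x + 2 * (q ⬝ᵥ x)))
        - (1/2) * (((R + Dᵀ * P * D)⁻¹ *ᵥ (Bᵀ *ᵥ (P *ᵥ x + p) + Dᵀ *ᵥ (P *ᵥ (C *ᵥ x + σ))
            + S *ᵥ x + r)) ⬝ᵥ (Bᵀ *ᵥ (P *ᵥ x + p) + Dᵀ *ᵥ (P *ᵥ (C *ᵥ x + σ)) + S *ᵥ x + r))) := by
  set K := R + Dᵀ * P * D with hK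
  set N0 := Bᵀ * P + Dᵀ * P * C + S with hN0
  set M0 := P * B + Cᵀ * P * D + Sᵀ with hM0
  have hM0t : M0ᵀ = N0 := by
    rw [hM0, hN0]
    simp [Matrix.transpose_add, Matrix.transpose_mul, hPs.eq, Matrix.mul_assoc]
  have hKit : (K⁻¹)ᵀ = K⁻¹ := by
    rw [Matrix.transpose_nonsing_inv, hKs.eq]
  have hKsw : ∀ a c, (K⁻¹ *ᵥ a) ⬝ᵥ c = (K⁻¹ *ᵥ c) ⬝ᵥ a := by
    intro a c
    rw [dpmv, hKit, dotProduct_comm]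
  have hl : Bᵀ *ᵥ (P *ᵥ x + p) + Dᵀ *ᵥ (P *ᵥ (C *ᵥ x + σ)) + S *ᵥ x + r
      = N0 *ᵥ x + η := by
    rw [hη, hN0]
    simp only [Matrix.mulVec_add, Matrix.add_mulVec, ← Matrix.mulVec_mulVec]
    abel
  have hP'x : (P' *ᵥ x) ⬝ᵥ x = (K⁻¹ *ᵥ (N0 *ᵥ x)) ⬝ᵥ (N0 *ᵥ x)
      - (2 * ((A *ᵥ x) ⬝ᵥ (P *ᵥ x)) + (P *ᵥ (C *ᵥ x)) ⬝ᵥ (C *ᵥ x) + (Q *ᵥ x) ⬝ᵥ x) := by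
    rw [hP']
    simp only [Matrix.sub_mulVec, Matrix.add_mulVec, sub_dotProduct, add_dotProduct,
      ← Matrix.mulVec_mulVec]
    have e1 : (M0 *ᵥ (K⁻¹ *ᵥ (N0 *ᵥ x))) ⬝ᵥ x = (K⁻¹ *ᵥ (N0 *ᵥ x)) ⬝ᵥ (N0 *ᵥ x) := by
      rw [dpmv, hM0t, dotProduct_comm]
    have e2 : (P *ᵥ (A *ᵥ x)) ⬝ᵥ x = (A *ᵥ x) ⬝ᵥ (P *ᵥ x) := by rw [dpmv, hPs.eq]
    have e3 : (Aᵀ *ᵥ (P *ᵥ x)) ⬝ᵥ x = (A *ᵥ x) ⬝ᵥ (P *ᵥ x) := by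
      rw [dpmv, Matrix.transpose_transpose, dotProduct_comm]
    have e4 : (Cᵀ *ᵥ (P *ᵥ (C *ᵥ x))) ⬝ᵥ x = (P *ᵥ (C *ᵥ x)) ⬝ᵥ (C *ᵥ x) := by
      rw [dpmv, Matrix.transpose_transpose, dotProduct_comm]
    rw [e1, e2, e3, e4]
    ring
  have hΘt : Θᵀ = -(M0 * K⁻¹) := by
    rw [hΘ, hM0]
    simp only [Matrix.transpose_neg, Matrix.transpose_mul, hKit]
    rw [show (Bᵀ * P + Dᵀ * P * C + S)ᵀ = P * B + Cᵀ * P * D + Sᵀ by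
      simp [Matrix.transpose_add, Matrix.transpose_mul, hPs.eq, Matrix.mul_assoc]]
  have hp'2 : p' = -(Aᵀ *ᵥ p + Cᵀ *ᵥ (P *ᵥ σ) + P *ᵥ b + q + Θᵀ *ᵥ η) := by
    rw [hp', hη]
    simp only [Matrix.transpose_add, Matrix.transpose_mul, Matrix.add_mulVec,
      Matrix.mulVec_add, ← Matrix.mulVec_mulVec]
    abel
  have hp'x : p' ⬝ᵥ x = (K⁻¹ *ᵥ η) ⬝ᵥ (N0 *ᵥ x)
      - ((A *ᵥ x) ⬝ᵥ p + (P *ᵥ σ) ⬝ᵥ (C *ᵥ x) + b ⬝ᵥ (P *ᵥ x) + q ⬝ᵥ x) := by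
    rw [hp'2, hΘt]
    have f1 : (Aᵀ *ᵥ p) ⬝ᵥ x = (A *ᵥ x) ⬝ᵥ p := by
      rw [dpmv, Matrix.transpose_transpose, dotProduct_comm]
    have f2 : (Cᵀ *ᵥ (P *ᵥ σ)) ⬝ᵥ x = (P *ᵥ σ) ⬝ᵥ (C *ᵥ x) := by
      rw [dpmv, Matrix.transpose_transpose, dotProduct_comm]
    have f3 : (P *ᵥ b) ⬝ᵥ x = b ⬝ᵥ (P *ᵥ x) := by rw [dpmv, hPs.eq]
    have f4 : ((-(M0 * K⁻¹)) *ᵥ η) ⬝ᵥ x = -((K⁻¹ *ᵥ η) ⬝ᵥ (N0 *ᵥ x)) := by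
      rw [Matrix.neg_mulVec, neg_dotProduct, ← Matrix.mulVec_mulVec, dpmv, hM0t,
        dotProduct_comm]
    simp only [neg_dotProduct, add_dotProduct, f1, f2, f3, f4]
    ring
  have hll : (K⁻¹ *ᵥ (N0 *ᵥ x + η)) ⬝ᵥ (N0 *ᵥ x + η)
      = (K⁻¹ *ᵥ (N0 *ᵥ x)) ⬝ᵥ (N0 *ᵥ x) + 2 * ((K⁻¹ *ᵥ η) ⬝ᵥ (N0 *ᵥ x))
        + (K⁻¹ *ᵥ η) ⬝ᵥ η := by
    have g1 : (K⁻¹ *ᵥ (N0 *ᵥ x)) ⬝ᵥ η = (K⁻¹ *ᵥ η) ⬝ᵥ (N0 *ᵥ x) := hKsw _ _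
    simp only [Matrix.mulVec_add, add_dotProduct, dotProduct_add, g1]
    ring
  have hw : (P *ᵥ (C *ᵥ x + σ)) ⬝ᵥ (C *ᵥ x + σ)
      = (P *ᵥ (C *ᵥ x)) ⬝ᵥ (C *ᵥ x) + 2 * ((P *ᵥ σ) ⬝ᵥ (C *ᵥ x)) + (P *ᵥ σ) ⬝ᵥ σ := by
    have g2 : (P *ᵥ (C *ᵥ x)) ⬝ᵥ σ = (P *ᵥ σ) ⬝ᵥ (C *ᵥ x) := by
      rw [dpmv, hPs.eq, dotProduct_comm]
    simp only [Matrix.mulVec_add, add_dotProduct, dotProduct_add, g2]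
    ring
  have hc : (A *ᵥ x + b) ⬝ᵥ (P *ᵥ x + p)
      = (A *ᵥ x) ⬝ᵥ (P *ᵥ x) + (A *ᵥ x) ⬝ᵥ p + b ⬝ᵥ (P *ᵥ x) + b ⬝ᵥ p := by
    simp only [add_dotProduct, dotProduct_add]
    ring
  have hpb : p ⬝ᵥ b = b ⬝ᵥ p := dotProduct_comm _ _
  rw [hl, hP'x, hp'x, hll, hw, hc, hpb]
  ring

/-- `V^T(t,x) = (1/2)(⟨P^T(t)x,x⟩ + 2⟨p^T(t),x⟩ + p₀^T(t))`, built from the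
solution of the differential Riccati equation and the associated backward ODE, is a classical
solution of the HJB equation `∂ₜV^T + H(x, V^T_x, V^T_xx) = 0`, `V^T(T,·) = 0`, on `[0,T]`. -/
theorem stmt1 {n m : ℕ}
    (A C : Matrix (Fin n) (Fin n) ℝ) (B D : Matrix (Fin n) (Fin m) ℝ)
    (b σ q : Fin n → ℝ) (r : Fin m → ℝ)
    (Q : Matrix (Fin n) (Fin n) ℝ) (S : Matrix (Fin m) (Fin n) ℝ)
    (R : Matrix (Fin m) (Fin m) ℝ) (hQ : Q.IsSymm) (hR : R.IsSymm)
    (T : ℝ) (hT : 0 < T)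
    (PT PT' : ℝ → Matrix (Fin n) (Fin n) ℝ)
    (hPTsymm : ∀ t ∈ Icc (0 : ℝ) T, (PT t).IsSymm)
    (hPTpos : ∀ t ∈ Icc (0 : ℝ) T, (R + Dᵀ * PT t * D).PosDef)
    (hPTderiv : ∀ t ∈ Icc (0 : ℝ) T, HasDerivWithinAt PT (PT' t) (Icc (0 : ℝ) T) t)
    (hRiccati : ∀ t ∈ Icc (0 : ℝ) T,
      PT' t + PT t * A + Aᵀ * PT t + Cᵀ * PT t * C + Q
        - (PT t * B + Cᵀ * PT t * D + Sᵀ) * (R + Dᵀ * PT t * D)⁻¹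
            * (Bᵀ * PT t + Dᵀ * PT t * C + S) = 0)
    (hPTfinal : PT T = 0)
    (ΘT : ℝ → Matrix (Fin m) (Fin n) ℝ)
    (hΘT : ∀ t, ΘT t = -((R + Dᵀ * PT t * D)⁻¹ * (Bᵀ * PT t + Dᵀ * PT t * C + S)))
    (pT pT' : ℝ → Fin n → ℝ)
    (hpTderiv : ∀ t ∈ Icc (0 : ℝ) T, HasDerivWithinAt pT (pT' t) (Icc (0 : ℝ) T) t)
    (hpTode : ∀ t ∈ Icc (0 : ℝ) T,
      pT' t + (A + B * ΘT t)ᵀ *ᵥ pT t + (C + D * ΘT t)ᵀ *ᵥ (PT t *ᵥ σ)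
        + PT t *ᵥ b + q + (ΘT t)ᵀ *ᵥ r = 0)
    (hpTfinal : pT T = 0)
    (η : ℝ → Fin m → ℝ)
    (hη : ∀ s, η s = Bᵀ *ᵥ pT s + Dᵀ *ᵥ (PT s *ᵥ σ) + r)
    (p0T : ℝ → ℝ)
    (hp0T : ∀ t, p0T t = ∫ s in t..T,
      ((PT s *ᵥ σ) ⬝ᵥ σ + 2 * (pT s ⬝ᵥ b)
        - ((R + Dᵀ * PT s * D)⁻¹ *ᵥ η s) ⬝ᵥ η s))
    (VT : ℝ → (Fin n → ℝ) → ℝ)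
    (hVT : ∀ t x, VT t x = (1 / 2) * ((PT t *ᵥ x) ⬝ᵥ x + 2 * (pT t ⬝ᵥ x) + p0T t)) :
    (∀ t ∈ Icc (0 : ℝ) T, ∀ x : Fin n → ℝ,
      HasDerivWithinAt (fun s => VT s x)
        (-(Hinf A C B D b σ q r Q S R x (PT t *ᵥ x + pT t) (PT t))) (Icc (0 : ℝ) T) t)
    ∧ (∀ x : Fin n → ℝ, VT T x = 0) := by
  constructor
  · intro t ht x
    have hPTc : ContinuousOn PT (Icc 0 T) := fun s hs => (hPTderiv s hs).continuousWithinAt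
    have hpTc : ContinuousOn pT (Icc 0 T) := fun s hs => (hpTderiv s hs).continuousWithinAt
    have hKc : ContinuousOn (fun s => R + Dᵀ * PT s * D) (Icc 0 T) :=
      continuousOn_const.add (contOn_matmul (contOn_matmul continuousOn_const hPTc)
        continuousOn_const)
    have hKinvc : ContinuousOn (fun s => (R + Dᵀ * PT s * D)⁻¹) (Icc 0 T) :=
      contOn_inv hKc (fun s hs => (hPTpos s hs).det_pos.ne')
    have hηc : ContinuousOn η (Icc 0 T) := by
      refine ContinuousOn.congr ?_ (fun s _ => hη s)
      exact ((contOn_mulVec continuousOn_const hpTc).add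
        (contOn_mulVec continuousOn_const (contOn_mulVec hPTc continuousOn_const))).add
        continuousOn_const
    have hgc : ContinuousOn (fun s => (PT s *ᵥ σ) ⬝ᵥ σ + 2 * (pT s ⬝ᵥ b)
        - ((R + Dᵀ * PT s * D)⁻¹ *ᵥ η s) ⬝ᵥ η s) (Icc 0 T) := by
      refine ContinuousOn.sub (ContinuousOn.add ?_ ?_) ?_
      · exact contOn_dot (contOn_mulVec hPTc continuousOn_const) continuousOn_const
      · exact continuousOn_const.mul (contOn_dot hpTc continuousOn_const)
      · exact contOn_dot (contOn_mulVec hKinvc hηc) hηc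
    have hPe : ∀ i j, HasDerivWithinAt (fun u => PT u i j) (PT' t i j) (Icc 0 T) t :=
      fun i j => hasDerivWithinAt_pi.1 (hasDerivWithinAt_pi.1 (hPTderiv t ht) i) j
    have hpe : ∀ j, HasDerivWithinAt (fun u => pT u j) (pT' t j) (Icc 0 T) t :=
      fun j => hasDerivWithinAt_pi.1 (hpTderiv t ht) j
    have h1 : HasDerivWithinAt (fun s => (PT s *ᵥ x) ⬝ᵥ x) ((PT' t *ᵥ x) ⬝ᵥ x)
        (Icc 0 T) t := by
      simp only [Matrix.mulVec, dotProduct]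
      exact HasDerivWithinAt.fun_sum fun i _ => ((HasDerivWithinAt.fun_sum fun j _ =>
        (hPe i j).mul_const (x j)).mul_const (x i))
    have h2 : HasDerivWithinAt (fun s => pT s ⬝ᵥ x) (pT' t ⬝ᵥ x) (Icc 0 T) t := by
      simp only [dotProduct]
      exact HasDerivWithinAt.fun_sum fun j _ => (hpe j).mul_const (x j)
    have h3 : HasDerivWithinAt p0T (-((PT t *ᵥ σ) ⬝ᵥ σ + 2 * (pT t ⬝ᵥ b)
        - ((R + Dᵀ * PT t * D)⁻¹ *ᵥ η t) ⬝ᵥ η t)) (Icc 0 T) t := by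
      haveI : Fact (t ∈ Icc (0:ℝ) T) := ⟨ht⟩
      have hint : IntervalIntegrable (fun s => (PT s *ᵥ σ) ⬝ᵥ σ + 2 * (pT s ⬝ᵥ b)
          - ((R + Dᵀ * PT s * D)⁻¹ *ᵥ η s) ⬝ᵥ η s) MeasureTheory.volume t T := by
        apply ContinuousOn.intervalIntegrable
        apply hgc.mono
        rw [uIcc_of_le ht.2]
        exact Icc_subset_Icc ht.1 le_rfl
      have := intervalIntegral.integral_hasDerivWithinAt_left (s := Icc (0:ℝ) T) hint
        (hgc.stronglyMeasurableAtFilter_nhdsWithin measurableSet_Icc t)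
        (hgc t ht)
      exact HasDerivWithinAt.congr this (fun s _ => (hp0T s)) (hp0T t)
    have hsum := ((h1.add (h2.const_mul 2)).add h3).const_mul ((1:ℝ)/2)
    have hVfun : (fun s => VT s x) = fun s =>
        (1/2) * ((PT s *ᵥ x) ⬝ᵥ x + 2 * (pT s ⬝ᵥ x) + p0T s) := funext fun s => hVT s x
    rw [hVfun]
    have hval : (1:ℝ)/2 * ((PT' t *ᵥ x) ⬝ᵥ x + 2 * (pT' t ⬝ᵥ x)
        + -((PT t *ᵥ σ) ⬝ᵥ σ + 2 * (pT t ⬝ᵥ b)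
          - ((R + Dᵀ * PT t * D)⁻¹ *ᵥ η t) ⬝ᵥ η t))
        = -(Hinf A C B D b σ q r Q S R x (PT t *ᵥ x + pT t) (PT t)) := by
      have hPs := hPTsymm t ht
      have hKpos := hPTpos t ht
      have hKsymm : (R + Dᵀ * PT t * D).IsSymm := by
        rw [Matrix.IsSymm]
        simp [Matrix.transpose_add, Matrix.transpose_mul, (hPTsymm t ht).eq, hR.eq,
          Matrix.mul_assoc]
      have hP'eq : PT' t = (PT t * B + Cᵀ * PT t * D + Sᵀ) * (R + Dᵀ * PT t * D)⁻¹
          * (Bᵀ * PT t + Dᵀ * PT t * C + S)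
          - (PT t * A + Aᵀ * PT t + Cᵀ * PT t * C + Q) := by
        have h := hRiccati t ht
        rw [sub_eq_zero] at h
        refine eq_sub_of_add_eq ?_
        rw [← h]; abel
      have hp'eq : pT' t = -((A + B * ΘT t)ᵀ *ᵥ pT t + (C + D * ΘT t)ᵀ *ᵥ (PT t *ᵥ σ)
          + PT t *ᵥ b + q + (ΘT t)ᵀ *ᵥ r) := by
        have h := hpTode t ht
        refine eq_neg_of_add_eq_zero_left ?_
        rw [← h]; abel
      have key := hval_aux A C B D b σ q r Q S R (PT t) (PT' t) hPs hKsymm (pT t) (pT' t) x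
        hP'eq (ΘT t) (hΘT t) hp'eq (η t) (hη t)
      have hinf : Hinf A C B D b σ q r Q S R x (PT t *ᵥ x + pT t) (PT t)
          = ((A *ᵥ x + b) ⬝ᵥ (PT t *ᵥ x + pT t)
            + (1/2) * ((PT t *ᵥ (C *ᵥ x + σ)) ⬝ᵥ (C *ᵥ x + σ))
            + (1/2) * ((Q *ᵥ x) ⬝ᵥ x + 2 * (q ⬝ᵥ x)))
          - (1/2) * (((R + Dᵀ * PT t * D)⁻¹ *ᵥ (Bᵀ *ᵥ (PT t *ᵥ x + pT t)
              + Dᵀ *ᵥ (PT t *ᵥ (C *ᵥ x + σ)) + S *ᵥ x + r)) ⬝ᵥ (Bᵀ *ᵥ (PT t *ᵥ x + pT t)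
              + Dᵀ *ᵥ (PT t *ᵥ (C *ᵥ x + σ)) + S *ᵥ x + r)) := by
        unfold Hinf
        exact quad_inf _ hKpos hKsymm _ _ _
          (fun u => ham_eq A C B D b σ q r Q S R (PT t) hPs x (PT t *ᵥ x + pT t) u)
      rw [hinf]
      exact key
    rw [← hval]
    exact hsum
  · intro x
    rw [hVT T x, hPTfinal, hpTfinal, hp0T T]
    simp
end

section
/- Let P ∈ 𝕊ⁿ with R + DᵀPD positive definite satisfy the algebraic Riccati equation PA + AᵀP + CᵀPC + Q − (PB + CᵀPD + Sᵀ)(R + DᵀPD)⁻¹(BᵀP + DᵀPC + S) = 0, and suppose A + BΘ̄ is invertible, where Θ̄ = −(R + DᵀPD)⁻¹(BᵀP + DᵀPC + S). Define p = −((A + BΘ̄)ᵀ)⁻¹(Pb + (C + DΘ̄)ᵀPσ + q + Θ̄ᵀr) and c₀ = (1/2)(2⟨p,b⟩ + ⟨Pσ,σ⟩ − ⟨(R + DᵀPD)⁻¹(Bᵀp + DᵀPσ + r), Bᵀp + DᵀPσ + r⟩). Then for any constant p₀ ∈ ℝ, the function V(x) = (1/2)(⟨Px,x⟩ + 2⟨p,x⟩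 + p₀) solves the cell problem: H(x, V_x(x), V_xx(x)) = c₀ for all x ∈ ℝⁿ; that is, H(x, Px + p, P) = c₀ for all x ∈ ℝⁿ. -/
open Matrix

private lemma dpA {k l : ℕ} (M : Matrix (Fin k) (Fin l) ℝ) (v : Fin l → ℝ) (w : Fin k → ℝ) :
    (M *ᵥ v) ⬝ᵥ w = v ⬝ᵥ (Mᵀ *ᵥ w) := by
  rw [Matrix.dotProduct_mulVec, Matrix.vecMul_transpose]

private lemma dpB {k l : ℕ} (M : Matrix (Fin k) (Fin l) ℝ) (v : Fin k → ℝ) (w : Fin l → ℝ) :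
    v ⬝ᵥ (M *ᵥ w) = w ⬝ᵥ (Mᵀ *ᵥ v) := by
  rw [dotProduct_comm, dpA]

/-- with `P` a solution of the algebraic Riccati equation such that `A + BΘ̄` is
invertible, `p` and `c₀` defined as stated, the quadratic function
`V(x) = (1/2)(⟨Px,x⟩ + 2⟨p,x⟩ + p₀)` solves the cell problem `H(x, V_x, V_xx) = c₀`, i.e.
`H(x, Px + p, P) = c₀` for all `x ∈ ℝⁿ`. -/
theorem stmt3 {n m : ℕ}
    (A C : Matrix (Fin n) (Fin n) ℝ) (B D : Matrix (Fin n) (Fin m) ℝ)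
    (b σ q : Fin n → ℝ) (r : Fin m → ℝ)
    (Q : Matrix (Fin n) (Fin n) ℝ) (S : Matrix (Fin m) (Fin n) ℝ)
    (R : Matrix (Fin m) (Fin m) ℝ) (hQ : Q.IsSymm) (hR : R.IsSymm)
    (P : Matrix (Fin n) (Fin n) ℝ) (hPsymm : P.IsSymm)
    (hpos : (R + Dᵀ * P * D).PosDef)
    (hARE : P * A + Aᵀ * P + Cᵀ * P * C + Q
      - (P * B + Cᵀ * P * D + Sᵀ) * (R + Dᵀ * P * D)⁻¹ * (Bᵀ * P + Dᵀ * P * C + S) = 0)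
    (Θbar : Matrix (Fin m) (Fin n) ℝ)
    (hΘbar : Θbar = -((R + Dᵀ * P * D)⁻¹ * (Bᵀ * P + Dᵀ * P * C + S)))
    (hinv : IsUnit (A + B * Θbar))
    (p : Fin n → ℝ)
    (hp : p = -(((A + B * Θbar)ᵀ)⁻¹ *ᵥ
      (P *ᵥ b + (C + D * Θbar)ᵀ *ᵥ (P *ᵥ σ) + q + Θbarᵀ *ᵥ r)))
    (c₀ : ℝ)
    (hc₀ : c₀ = (1 / 2) * (2 * (p ⬝ᵥ b) + (P *ᵥ σ) ⬝ᵥ σ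
      - ((R + Dᵀ * P * D)⁻¹ *ᵥ (Bᵀ *ᵥ p + Dᵀ *ᵥ (P *ᵥ σ) + r)) ⬝ᵥ
          (Bᵀ *ᵥ p + Dᵀ *ᵥ (P *ᵥ σ) + r))) :
    ∀ x : Fin n → ℝ, Hinf A C B D b σ q r Q S R x (P *ᵥ x + p) P = c₀ := by
  subst hΘbar hp hc₀
  set K : Matrix (Fin m) (Fin m) ℝ := R + Dᵀ * P * D with hKdef
  set L : Matrix (Fin m) (Fin n) ℝ := Bᵀ * P + Dᵀ * P * C + S with hLdef
  have hdetK : IsUnit K.det := isUnit_iff_ne_zero.mpr (ne_of_gt hpos.det_pos)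
  have hK1 : K * K⁻¹ = 1 := K.mul_nonsing_inv hdetK
  have hK2 : K⁻¹ * K = 1 := K.nonsing_inv_mul hdetK
  have hKT : Kᵀ = K := by
    rw [hKdef]
    simp [Matrix.transpose_add, Matrix.transpose_mul, Matrix.transpose_transpose, hR.eq, hPsymm.eq,
      Matrix.mul_assoc]
  have hKiT : (K⁻¹)ᵀ = K⁻¹ := by rw [Matrix.transpose_nonsing_inv, hKT]
  set Θ : Matrix (Fin m) (Fin n) ℝ := -(K⁻¹ * L) with hΘdef
  set M : Matrix (Fin n) (Fin n) ℝ := A + B * Θ with hMdef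
  have hMdet : IsUnit Mᵀ.det := by
    rw [Matrix.det_transpose]; exact (Matrix.isUnit_iff_isUnit_det M).mp hinv
  set w : Fin n → ℝ := P *ᵥ b + (C + D * Θ)ᵀ *ᵥ (P *ᵥ σ) + q + Θᵀ *ᵥ r with hwdef
  set p : Fin n → ℝ := -((Mᵀ)⁻¹ *ᵥ w) with hpdef
  have hplin : Mᵀ *ᵥ p = -w := by
    rw [hpdef, Matrix.mulVec_neg, Matrix.mulVec_mulVec, Matrix.mul_nonsing_inv _ hMdet,
      Matrix.one_mulVec]
  set φ : Fin m → ℝ := Bᵀ *ᵥ p + Dᵀ *ᵥ (P *ᵥ σ) + r with hφdef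
  have hKcanL : K * (K⁻¹ * L) = L := by rw [← Matrix.mul_assoc, hK1, Matrix.one_mul]
  have hLT : Lᵀ = P * B + Cᵀ * (P * D) + Sᵀ := by
    rw [hLdef]
    simp [Matrix.transpose_add, Matrix.transpose_mul, Matrix.transpose_transpose, hPsymm.eq,
      Matrix.mul_assoc]
  have hG : Lᵀ * (K⁻¹ * L) = P * A + Aᵀ * P + Cᵀ * (P * C) + Q := by
    have h2 := sub_eq_zero.mp hARE
    rw [hLT]
    simp only [Matrix.mul_assoc, Matrix.add_mul] at h2 ⊢
    rw [← h2]
  intro x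
  set ub : Fin m → ℝ := -(K⁻¹ *ᵥ (L *ᵥ x + φ)) with hubdef
  set c₀ : ℝ := 1 / 2 * (2 * (p ⬝ᵥ b) + (P *ᵥ σ) ⬝ᵥ σ - K⁻¹ *ᵥ φ ⬝ᵥ φ) with hc₀def
  have key : ∀ u : Fin m → ℝ, Ham A C B D b σ q r Q S R x (P *ᵥ x + p) P u
      = c₀ + 1 / 2 * ((K *ᵥ (u - ub)) ⬝ᵥ (u - ub)) := by
    intro u
    rw [Ham, hc₀def, hubdef, sub_neg_eq_add]
    simp only [Matrix.mulVec_add, Matrix.mulVec_sub, Matrix.add_mulVec, Matrix.sub_mulVec,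
      Matrix.mulVec_neg, Matrix.neg_mulVec, Matrix.mulVec_mulVec, dotProduct_add,
      add_dotProduct, dotProduct_sub, sub_dotProduct, dotProduct_neg, neg_dotProduct,
      dpA, Matrix.transpose_mul, Matrix.transpose_add, Matrix.transpose_transpose,
      Matrix.transpose_neg, hPsymm.eq, hR.eq, hQ.eq, hKiT, hKT, hK1, hK2, Matrix.one_mulVec,
      Matrix.mul_assoc, Matrix.mul_one, Matrix.one_mul, hKcanL]
    have br1 : x ⬝ᵥ ((P * A) *ᵥ x) = x ⬝ᵥ ((Aᵀ * P) *ᵥ x) := by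
      rw [dpB]; simp [Matrix.transpose_mul, hPsymm.eq]
    have br2 : u ⬝ᵥ ((Dᵀ * (P * C)) *ᵥ x) = x ⬝ᵥ ((Cᵀ * (P * D)) *ᵥ u) := by
      rw [dpB]; simp [Matrix.transpose_mul, Matrix.transpose_transpose, hPsymm.eq,
        Matrix.mul_assoc]
    have br3 : σ ⬝ᵥ ((P * D) *ᵥ u) = u ⬝ᵥ ((Dᵀ * P) *ᵥ σ) := by
      rw [dpB]; simp [Matrix.transpose_mul, hPsymm.eq]
    have br4 : b ⬝ᵥ (P *ᵥ x) = x ⬝ᵥ (P *ᵥ b) := by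
      rw [dpB, hPsymm.eq]
    have br5 : σ ⬝ᵥ ((P * C) *ᵥ x) = x ⬝ᵥ ((Cᵀ * P) *ᵥ σ) := by
      rw [dpB]; simp [Matrix.transpose_mul, hPsymm.eq]
    have br6 : q ⬝ᵥ x = x ⬝ᵥ q := dotProduct_comm _ _
    have br7 : b ⬝ᵥ p = p ⬝ᵥ b := dotProduct_comm _ _
    have br8 : u ⬝ᵥ (L *ᵥ x) = x ⬝ᵥ (Lᵀ *ᵥ u) := dpB _ _ _
    have br9 : u ⬝ᵥ φ = φ ⬝ᵥ u := dotProduct_comm _ _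
    have br10 : φ ⬝ᵥ ((K⁻¹ * L) *ᵥ x) = x ⬝ᵥ ((Lᵀ * K⁻¹) *ᵥ φ) := by
      rw [dpB]; simp [Matrix.transpose_mul, hKiT]
    have br11 : x ⬝ᵥ ((P * B) *ᵥ u) = u ⬝ᵥ ((Bᵀ * P) *ᵥ x) := by
      rw [dpB]; simp [Matrix.transpose_mul, hPsymm.eq]
    have e1 : u ⬝ᵥ (K *ᵥ u) = u ⬝ᵥ (R *ᵥ u) + u ⬝ᵥ ((Dᵀ * (P * D)) *ᵥ u) := by
      rw [hKdef]
      simp [Matrix.add_mulVec, dotProduct_add, Matrix.mul_assoc]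
    have e2 : x ⬝ᵥ (Lᵀ *ᵥ u) = x ⬝ᵥ ((P * B) *ᵥ u) + x ⬝ᵥ ((Cᵀ * (P * D)) *ᵥ u)
        + x ⬝ᵥ (Sᵀ *ᵥ u) := by
      rw [hLT]
      simp [Matrix.add_mulVec, dotProduct_add]
    have e3 : φ ⬝ᵥ u = u ⬝ᵥ (Bᵀ *ᵥ p) + u ⬝ᵥ ((Dᵀ * P) *ᵥ σ) + r ⬝ᵥ u := by
      rw [hφdef]
      simp [add_dotProduct, Matrix.mulVec_mulVec]
      rw [dotProduct_comm (Bᵀ *ᵥ p) u, dotProduct_comm ((Dᵀ * P) *ᵥ σ) u]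
    have e4 : x ⬝ᵥ ((Lᵀ * (K⁻¹ * L)) *ᵥ x) = x ⬝ᵥ ((P * A) *ᵥ x) + x ⬝ᵥ ((Aᵀ * P) *ᵥ x)
        + x ⬝ᵥ ((Cᵀ * (P * C)) *ᵥ x) + x ⬝ᵥ (Q *ᵥ x) := by
      rw [hG]
      simp [Matrix.add_mulVec, dotProduct_add]
    have e6 : x ⬝ᵥ ((Lᵀ * K⁻¹) *ᵥ φ) = x ⬝ᵥ ((Lᵀ * (K⁻¹ * Bᵀ)) *ᵥ p)
        + x ⬝ᵥ ((Lᵀ * (K⁻¹ * (Dᵀ * P))) *ᵥ σ) + x ⬝ᵥ ((Lᵀ * K⁻¹) *ᵥ r) := by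
      rw [hφdef]
      simp [Matrix.mulVec_add, dotProduct_add, Matrix.mulVec_mulVec, Matrix.mul_assoc]
    have e5 : x ⬝ᵥ (Aᵀ *ᵥ p) - x ⬝ᵥ ((Lᵀ * (K⁻¹ * Bᵀ)) *ᵥ p)
        = -(x ⬝ᵥ (P *ᵥ b) + x ⬝ᵥ ((Cᵀ * P) *ᵥ σ)
            - x ⬝ᵥ ((Lᵀ * (K⁻¹ * (Dᵀ * P))) *ᵥ σ) + x ⬝ᵥ q
            - x ⬝ᵥ ((Lᵀ * K⁻¹) *ᵥ r)) := by
      have h := congrArg (fun v => x ⬝ᵥ v) hplin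
      simp only [hMdef, hwdef, hΘdef] at h
      simp only [Matrix.transpose_add, Matrix.transpose_mul, Matrix.transpose_neg,
        Matrix.transpose_transpose, hKiT, hPsymm.eq, Matrix.add_mulVec, Matrix.neg_mulVec,
        Matrix.mulVec_neg, Matrix.mulVec_add, Matrix.mulVec_mulVec, dotProduct_add,
        dotProduct_neg, Matrix.mul_assoc, Matrix.neg_mul, Matrix.mul_neg, Matrix.add_mul,
        Matrix.sub_mulVec, dotProduct_sub] at h
      linarith [h]
    linarith [br1, br2, br3, br4, br5, br6, br7, br8, br9, br10, br11, e1, e2, e3, e4, e5, e6]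
  have hnn : ∀ u : Fin m → ℝ, c₀ ≤ Ham A C B D b σ q r Q S R x (P *ᵥ x + p) P u := by
    intro u
    rw [key u]
    have h0 : 0 ≤ (u - ub) ⬝ᵥ (K *ᵥ (u - ub)) := by
      simpa using hpos.posSemidef.dotProduct_mulVec_nonneg (u - ub)
    rw [dotProduct_comm] at h0
    linarith
  rw [Hinf]
  apply le_antisymm
  · have hb : BddBelow (Set.range fun u : Fin m → ℝ =>
        Ham A C B D b σ q r Q S R x (P *ᵥ x + p) P u) := by
      refine ⟨c₀, ?_⟩; rintro y ⟨u, rfl⟩; exact hnn u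
    calc (⨅ u : Fin m → ℝ, Ham A C B D b σ q r Q S R x (P *ᵥ x + p) P u)
        ≤ Ham A C B D b σ q r Q S R x (P *ᵥ x + p) P ub := ciInf_le hb ub
      _ = c₀ := by rw [key ub]; simp
  · exact le_ciInf hnn
end

section
/- Let P ∈ 𝕊ⁿ with R + DᵀPD positive definite satisfy the algebraic Riccati equation PA + AᵀP + CᵀPC + Q − (PB + CᵀPD + Sᵀ)(R + DᵀPD)⁻¹(BᵀP + DᵀPC + S) = 0. Set Θ̄ = −(R + DᵀPD)⁻¹(BᵀP + DᵀPC + S), suppose A + BΘ̄ is invertible, and let p = −((A + BΘ̄)ᵀ)⁻¹(Pb + (C + DΘ̄)ᵀPσ + q + Θ̄ᵀr) and θ̄ = −(R + DᵀPD)⁻¹(Bᵀp + DᵀPσ + r). Define x* = −(A + BΘ̄)⁻¹(Bθ̄ + b), u* = Θ̄x* + θ̄, and y* = Px* + p. Then the triple (x*, u*, y*) satisfies the Lagrange (KKT) system of the static optimization problem: (Q + CᵀPC)x* + (S + DᵀPC)ᵀu* + Aᵀy* + q + CᵀPσ = 0; (S + DᵀPC)x* + (R + DᵀPD)u* + Bᵀy*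 + r + DᵀPσ = 0; and Ax* + Bu* + b = 0. -/
open Matrix

/-- with `P` a solution of the algebraic Riccati equation, `Θ̄`, `p`, `θ̄`
defined as stated and `A + BΘ̄` invertible, the triple
`x* = −(A+BΘ̄)⁻¹(Bθ̄+b)`, `u* = Θ̄x* + θ̄`, `y* = Px* + p` satisfies the Lagrange (KKT)
system of the static optimization problem. -/
theorem stmt8 {n m : ℕ}
    (A C : Matrix (Fin n) (Fin n) ℝ) (B D : Matrix (Fin n) (Fin m) ℝ)
    (b σ q : Fin n → ℝ) (r : Fin m → ℝ)
    (Q : Matrix (Fin n) (Fin n) ℝ) (S : Matrix (Fin m) (Fin n) ℝ)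
    (R : Matrix (Fin m) (Fin m) ℝ) (hQ : Q.IsSymm) (hR : R.IsSymm)
    (P : Matrix (Fin n) (Fin n) ℝ) (hPsymm : P.IsSymm)
    (hpos : (R + Dᵀ * P * D).PosDef)
    (hARE : P * A + Aᵀ * P + Cᵀ * P * C + Q
      - (P * B + Cᵀ * P * D + Sᵀ) * (R + Dᵀ * P * D)⁻¹ * (Bᵀ * P + Dᵀ * P * C + S) = 0)
    (Θbar : Matrix (Fin m) (Fin n) ℝ)
    (hΘbar : Θbar = -((R + Dᵀ * P * D)⁻¹ * (Bᵀ * P + Dᵀ * P * C + S)))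
    (hinv : IsUnit (A + B * Θbar))
    (p : Fin n → ℝ)
    (hp : p = -(((A + B * Θbar)ᵀ)⁻¹ *ᵥ
      (P *ᵥ b + (C + D * Θbar)ᵀ *ᵥ (P *ᵥ σ) + q + Θbarᵀ *ᵥ r)))
    (θbar : Fin m → ℝ)
    (hθbar : θbar = -((R + Dᵀ * P * D)⁻¹ *ᵥ (Bᵀ *ᵥ p + Dᵀ *ᵥ (P *ᵥ σ) + r)))
    (xs : Fin n → ℝ) (hxs : xs = -((A + B * Θbar)⁻¹ *ᵥ (B *ᵥ θbar + b)))
    (us : Fin m → ℝ) (hus : us = Θbar *ᵥ xs + θbar)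
    (ys : Fin n → ℝ) (hys : ys = P *ᵥ xs + p) :
    (Q + Cᵀ * P * C) *ᵥ xs + (S + Dᵀ * P * C)ᵀ *ᵥ us + Aᵀ *ᵥ ys + q + (Cᵀ * P) *ᵥ σ = 0
    ∧ (S + Dᵀ * P * C) *ᵥ xs + (R + Dᵀ * P * D) *ᵥ us + Bᵀ *ᵥ ys + r + (Dᵀ * P) *ᵥ σ = 0
    ∧ A *ᵥ xs + B *ᵥ us + b = 0 := by
  have hKd : IsUnit (R + Dᵀ * P * D).det := hpos.det_pos.ne'.isUnit
  have hGd : IsUnit (A + B * Θbar).det := (Matrix.isUnit_iff_isUnit_det _).1 hinv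
  have hGtd : IsUnit ((A + B * Θbar)ᵀ).det := by rwa [Matrix.det_transpose]
  have hKsymm : (R + Dᵀ * P * D)ᵀ = R + Dᵀ * P * D := by
    simp [Matrix.transpose_add, Matrix.transpose_mul, hPsymm.eq, hR.eq, Matrix.mul_assoc]
  -- matrix identities
  have m1 : (R + Dᵀ * P * D) * Θbar + (Bᵀ * P + Dᵀ * P * C + S) = 0 := by
    rw [hΘbar, Matrix.mul_neg, ← Matrix.mul_assoc,
      Matrix.mul_nonsing_inv _ hKd, Matrix.one_mul, neg_add_cancel]
  have m3 : Θbarᵀ * (R + Dᵀ * (P * D)) + (P * B + Cᵀ * (P * D) + Sᵀ) = 0 := by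
    have h := congrArg Matrix.transpose m1
    simpa only [Matrix.transpose_add, Matrix.transpose_mul, Matrix.transpose_transpose,
      Matrix.transpose_zero, hPsymm.eq, hR.eq] using h
  have hΘ0 : Θbar + (R + Dᵀ * P * D)⁻¹ * (Bᵀ * P + Dᵀ * P * C + S) = 0 := by
    rw [hΘbar, neg_add_cancel]
  have hARE' : P * A + Aᵀ * P + Cᵀ * P * C + Q
      = (P * B + Cᵀ * P * D + Sᵀ) * ((R + Dᵀ * P * D)⁻¹ * (Bᵀ * P + Dᵀ * P * C + S)) := by
    rw [← Matrix.mul_assoc]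
    exact sub_eq_zero.mp hARE
  have hMΘ : (P * B + Cᵀ * P * D + Sᵀ) * Θbar
      = -((P * B + Cᵀ * P * D + Sᵀ) * ((R + Dᵀ * P * D)⁻¹ * (Bᵀ * P + Dᵀ * P * C + S))) := by
    rw [hΘbar, Matrix.mul_neg]
  have m2 : Q + Cᵀ * P * C + (Sᵀ + Cᵀ * P * D) * Θbar + Aᵀ * P
      + P * A + P * B * Θbar = 0 := by
    calc Q + Cᵀ * P * C + (Sᵀ + Cᵀ * P * D) * Θbar + Aᵀ * P + P * A + P * B * Θbar
        = (P * A + Aᵀ * P + Cᵀ * P * C + Q) + (P * B + Cᵀ * P * D + Sᵀ) * Θbar := by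
          simp only [Matrix.add_mul]; abel
      _ = 0 := by rw [hARE', hMΘ, add_neg_cancel]
  -- vector identities
  have e1 : (A + B * Θbar) *ᵥ xs + (B *ᵥ θbar + b) = 0 := by
    rw [hxs, Matrix.mulVec_neg, Matrix.mulVec_mulVec,
      Matrix.mul_nonsing_inv _ hGd, Matrix.one_mulVec, neg_add_cancel]
  have e2 : (A + B * Θbar)ᵀ *ᵥ p
      + (P *ᵥ b + (C + D * Θbar)ᵀ *ᵥ (P *ᵥ σ) + q + Θbarᵀ *ᵥ r) = 0 := by
    rw [hp, Matrix.mulVec_neg, Matrix.mulVec_mulVec,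
      Matrix.mul_nonsing_inv _ hGtd, Matrix.one_mulVec, neg_add_cancel]
  have e3 : (R + Dᵀ * P * D) *ᵥ θbar + (Bᵀ *ᵥ p + Dᵀ *ᵥ (P *ᵥ σ) + r) = 0 := by
    rw [hθbar, Matrix.mulVec_neg, Matrix.mulVec_mulVec,
      Matrix.mul_nonsing_inv _ hKd, Matrix.one_mulVec, neg_add_cancel]
  -- combine
  have h1 := congrArg (fun v => P *ᵥ v) e1
  have h3 := congrArg (fun v => Θbarᵀ *ᵥ v) e3
  have hm1 := congrArg (fun M => M *ᵥ xs) m1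
  have hm2 := congrArg (fun M => M *ᵥ xs) m2
  have hm3 := congrArg (fun M => M *ᵥ θbar) m3
  simp only [hus, hys, Matrix.add_mulVec, Matrix.mulVec_add, Matrix.mulVec_neg,
    Matrix.neg_mulVec, ← Matrix.mulVec_mulVec, Matrix.transpose_add, Matrix.transpose_mul,
    Matrix.transpose_transpose, hPsymm.eq, Matrix.mulVec_zero, Matrix.zero_mulVec] at h1 h3 hm1 hm2 hm3 e1 e2 e3 ⊢
  refine ⟨?_, ?_, ?_⟩
  · linear_combination hm2 - h1 + hm3 - h3 + e2
  · linear_combination hm1 + e3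
  · linear_combination e1
end

section
/- Fix t₀ ≥ 0, a constant K₀ > 0, and a positive definite matrix P̄ ∈ 𝕊ⁿ. Let T ≥ t₀ and let A_T : [0,T] → ℝ^{n×n} and h_T : [0,T] → ℝⁿ be continuous with ‖A_T(t)‖ ≤ K₀ and |h_T(t)| ≤ K₀ for all t ∈ [0,T], and with P̄A_T(t) + A_T(t)ᵀP̄ ⪯ −2I for all t ∈ [0, T − t₀]. Let p_T : [0,T] → ℝⁿ be differentiable with ṗ_T(t) + A_T(t)p_T(t) + h_T(t) = 0 on [0,T] and p_T(T) = 0. Then there exists a constant K > 0, depending only on t₀, K₀, and P̄ (not on T), such that |p_T(t)| ≤ K for all t ∈ [0,T]. -/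
open Matrix Set
open scoped Matrix.Norms.L2Operator

/-- The Euclidean norm on `ℝᵏ`. -/
noncomputable def eucNorm {k : ℕ} (v : Fin k → ℝ) : ℝ := Real.sqrt (v ⬝ᵥ v)

lemma dot_self_nonneg {k : ℕ} (v : Fin k → ℝ) : 0 ≤ v ⬝ᵥ v :=
  Finset.sum_nonneg fun i _ => mul_self_nonneg _

lemma enorm_nonneg' {k : ℕ} (v : Fin k → ℝ) : 0 ≤ eucNorm v := Real.sqrt_nonneg _

lemma enorm_sq {k : ℕ} (v : Fin k → ℝ) : eucNorm v * eucNorm v = v ⬝ᵥ v :=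
  Real.mul_self_sqrt (dot_self_nonneg v)

lemma enorm_eq_norm {k : ℕ} (v : Fin k → ℝ) :
    eucNorm v = ‖(EuclideanSpace.equiv (Fin k) ℝ).symm v‖ := by
  unfold eucNorm
  simp [EuclideanSpace.norm_eq, sq, Real.norm_eq_abs, abs_mul_abs_self, dotProduct]

lemma dot_eq_inner {k : ℕ} (u v : Fin k → ℝ) :
    u ⬝ᵥ v = (inner ℝ ((EuclideanSpace.equiv (Fin k) ℝ).symm u) ((EuclideanSpace.equiv (Fin k) ℝ).symm v) : ℝ) := by
  simp [PiLp.inner_apply, dotProduct, RCLike.inner_apply, mul_comm]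

lemma dot_le_enorm {k : ℕ} (u v : Fin k → ℝ) : u ⬝ᵥ v ≤ eucNorm u * eucNorm v := by
  rw [dot_eq_inner, enorm_eq_norm, enorm_eq_norm]
  exact real_inner_le_norm _ _

lemma mulVec_dot_le {k : ℕ} (M : Matrix (Fin k) (Fin k) ℝ) (u v : Fin k → ℝ) :
    (M *ᵥ u) ⬝ᵥ v ≤ ‖M‖ * (eucNorm u * eucNorm v) := by
  calc (M *ᵥ u) ⬝ᵥ v ≤ eucNorm (M *ᵥ u) * eucNorm v := dot_le_enorm _ _
  _ ≤ (‖M‖ * eucNorm u) * eucNorm v := by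
      apply mul_le_mul_of_nonneg_right _ (enorm_nonneg' v)
      rw [enorm_eq_norm, enorm_eq_norm]
      exact M.l2_opNorm_mulVec _
  _ = ‖M‖ * (eucNorm u * eucNorm v) := by ring

lemma dot_transpose {k : ℕ} (M : Matrix (Fin k) (Fin k) ℝ) (u v : Fin k → ℝ) :
    (M *ᵥ u) ⬝ᵥ v = (Mᵀ *ᵥ v) ⬝ᵥ u := by
  simp only [dotProduct, mulVec, Matrix.transpose_apply, Finset.sum_mul]
  rw [Finset.sum_comm]
  congr 1; ext i; congr 1; ext j; ring

lemma quad_hasDeriv {k : ℕ} (M : Matrix (Fin k) (Fin k) ℝ) {p : ℝ → Fin k → ℝ}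
    {q : Fin k → ℝ} {s : Set ℝ} {t : ℝ} (hp : HasDerivWithinAt p q s t) :
    HasDerivWithinAt (fun τ => (M *ᵥ p τ) ⬝ᵥ p τ)
      ((M *ᵥ q) ⬝ᵥ p t + (M *ᵥ p t) ⬝ᵥ q) s t := by
  have hc : ∀ i, HasDerivWithinAt (fun τ => p τ i) (q i) s t :=
    fun i => hasDerivWithinAt_pi.1 hp i
  have h1 : ∀ i, HasDerivWithinAt (fun τ => (M *ᵥ p τ) i) ((M *ᵥ q) i) s t := by
    intro i
    simpa [mulVec, dotProduct] using
      HasDerivWithinAt.fun_sum (fun j (_ : j ∈ Finset.univ) => (hc j).const_mul (M i j))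
  have h2 := HasDerivWithinAt.fun_sum
    (fun i (_ : i ∈ Finset.univ) => ((h1 i).mul (hc i)))
  have e1 : (fun τ => (M *ᵥ p τ) ⬝ᵥ p τ)
      = fun τ => ∑ i, (M *ᵥ p τ) i * p τ i := by
    funext τ; rfl
  rw [e1]
  refine HasDerivWithinAt.congr_deriv h2 ?_
  rw [Finset.sum_add_distrib]; rfl

lemma posdef_lower {k : ℕ} {M : Matrix (Fin k) (Fin k) ℝ} (hM : M.PosDef) :
    ∃ c > (0:ℝ), ∀ v : Fin k → ℝ, c * (v ⬝ᵥ v) ≤ (M *ᵥ v) ⬝ᵥ v := by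
  rcases Nat.eq_zero_or_pos k with hk | hk
  · refine ⟨1, one_pos, fun v => ?_⟩
    subst hk
    simp [dotProduct]
  · have hcont : Continuous fun v : Fin k → ℝ => v ⬝ᵥ v := by
      unfold dotProduct; fun_prop
    have hcontM : Continuous fun v : Fin k → ℝ => (M *ᵥ v) ⬝ᵥ v := by
      simp only [dotProduct, mulVec]; fun_prop
    set S : Set (Fin k → ℝ) := {v | v ⬝ᵥ v = 1} with hS
    have hclosed : IsClosed S := isClosed_eq hcont continuous_const
    have hbdd : Bornology.IsBounded S := by
      apply Bornology.IsBounded.subset (Metric.isBounded_closedBall (x := (0 : Fin k → ℝ)) (r := 1))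
      intro v hv
      simp only [Metric.mem_closedBall, dist_zero_right]
      rw [pi_norm_le_iff_of_nonneg zero_le_one]
      intro i
      rw [Real.norm_eq_abs, abs_le_one_iff_mul_self_le_one]
      calc v i * v i ≤ ∑ j, v j * v j :=
        Finset.single_le_sum (fun j _ => mul_self_nonneg (v j)) (Finset.mem_univ i)
      _ = 1 := hv
    have hcompact : IsCompact S := Metric.isCompact_of_isClosed_isBounded hclosed hbdd
    have hne : S.Nonempty := by
      refine ⟨Pi.single ⟨0, hk⟩ 1, ?_⟩
      simp [hS, dotProduct, Pi.single_apply]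
    obtain ⟨v₀, hv₀S, hmin⟩ := hcompact.exists_isMinOn hne hcontM.continuousOn
    have hv₀ne : v₀ ≠ 0 := by
      intro h
      rw [h] at hv₀S
      simp [hS, dotProduct] at hv₀S
    have hc : 0 < (M *ᵥ v₀) ⬝ᵥ v₀ := by
      have := hM.re_dotProduct_pos hv₀ne
      simpa [dotProduct_comm] using this
    refine ⟨(M *ᵥ v₀) ⬝ᵥ v₀, hc, fun v => ?_⟩
    rcases eq_or_ne v 0 with rfl | hv
    · simp
    · have hvv : 0 < v ⬝ᵥ v := by
        rcases lt_or_eq_of_le (dot_self_nonneg v) with h | h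
        · exact h
        · exact absurd (dotProduct_self_eq_zero.1 h.symm) hv
      set r : ℝ := Real.sqrt (v ⬝ᵥ v) with hr
      have hrpos : 0 < r := Real.sqrt_pos.2 hvv
      have hrsq : r * r = v ⬝ᵥ v := Real.mul_self_sqrt hvv.le
      have hw : (r⁻¹ • v) ∈ S := by
        simp only [hS, mem_setOf_eq, smul_dotProduct, dotProduct_smul, smul_eq_mul]
        field_simp
        rw [sq, hrsq]
      have := hmin hw
      have hexp : (M *ᵥ (r⁻¹ • v)) ⬝ᵥ (r⁻¹ • v) = r⁻¹ * (r⁻¹ * ((M *ᵥ v) ⬝ᵥ v)) := by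
        rw [mulVec_smul, smul_dotProduct, dotProduct_smul]
        simp [smul_eq_mul]
      rw [isMinOn_iff] at hmin
      have h2 := hmin _ hw
      rw [hexp] at h2
      -- h2 : (M *ᵥ v₀) ⬝ᵥ v₀ ≤ r⁻¹ * (r⁻¹ * ((M *ᵥ v) ⬝ᵥ v))
      have h3 : ((M *ᵥ v₀) ⬝ᵥ v₀) * (r * r) ≤ (M *ᵥ v) ⬝ᵥ v := by
        have := mul_le_mul_of_nonneg_right h2 (mul_pos hrpos hrpos).le
        calc ((M *ᵥ v₀) ⬝ᵥ v₀) * (r * r) ≤ r⁻¹ * (r⁻¹ * ((M *ᵥ v) ⬝ᵥ v)) * (r * r) := this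
        _ = (M *ᵥ v) ⬝ᵥ v := by field_simp
      rw [← hrsq]
      linarith

lemma quad_continuousOn {k : ℕ} (M : Matrix (Fin k) (Fin k) ℝ) {p : ℝ → Fin k → ℝ} {s : Set ℝ}
    (hp : ContinuousOn p s) : ContinuousOn (fun t => (M *ᵥ p t) ⬝ᵥ p t) s := by
  have hcomp : ∀ i, ContinuousOn (fun t => p t i) s :=
    fun i => (continuous_apply i).comp_continuousOn hp
  simp only [dotProduct, mulVec]
  exact continuousOn_finset_sum _ fun i _ =>
    (continuousOn_finset_sum _ fun j _ => continuousOn_const.mul (hcomp j)).mul (hcomp i)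

lemma exp_hasDerivAt (b : ℝ) (x : ℝ) :
    HasDerivAt (fun x => Real.exp (b*x)) (Real.exp (b*x) * b) x := by
  have h1 : HasDerivAt (fun x : ℝ => b*x) b x := by
    simpa using (hasDerivAt_id x).const_mul b
  exact h1.exp

set_option maxHeartbeats 2000000 in
/-- uniform (in the horizon `T`) boundedness of the solution of the backward
ODE `ṗ_T + A_T(t)p_T + h_T(t) = 0`, `p_T(T) = 0`, under a Lyapunov inequality
`P̄A_T(t) + A_T(t)ᵀP̄ ⪯ −2I` on `[0, T − t₀]` and bounds `‖A_T‖, |h_T| ≤ K₀`. -/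
theorem stmt10 {n : ℕ} (t₀ K₀ : ℝ) (ht₀ : 0 ≤ t₀) (hK₀ : 0 < K₀)
    (Pbar : Matrix (Fin n) (Fin n) ℝ) (hPbar : Pbar.PosDef) :
    ∃ K > (0 : ℝ), ∀ T : ℝ, t₀ ≤ T →
      ∀ AT : ℝ → Matrix (Fin n) (Fin n) ℝ, ∀ hT : ℝ → Fin n → ℝ,
        ContinuousOn AT (Icc 0 T) → ContinuousOn hT (Icc 0 T) →
        (∀ t ∈ Icc (0 : ℝ) T, ‖AT t‖ ≤ K₀) →
        (∀ t ∈ Icc (0 : ℝ) T, eucNorm (hT t) ≤ K₀) →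
        (∀ t ∈ Icc (0 : ℝ) (T - t₀), ∀ v : Fin n → ℝ,
          ((Pbar * AT t + (AT t)ᵀ * Pbar) *ᵥ v) ⬝ᵥ v ≤ -2 * (v ⬝ᵥ v)) →
        ∀ pT pT' : ℝ → Fin n → ℝ,
          (∀ t ∈ Icc (0 : ℝ) T, HasDerivWithinAt pT (pT' t) (Icc (0 : ℝ) T) t) →
          (∀ t ∈ Icc (0 : ℝ) T, pT' t + AT t *ᵥ pT t + hT t = 0) →
          pT T = 0 →
          ∀ t ∈ Icc (0 : ℝ) T, eucNorm (pT t) ≤ K := by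
  obtain ⟨c, hc, hclower⟩ := posdef_lower hPbar
  set lam : ℝ := ‖Pbar‖ + 1 with hlamdef
  have hlam0 : 0 < lam := by positivity
  have hPlam : ‖Pbar‖ ≤ lam := by simp [hlamdef]
  set B₁ : ℝ := Real.exp (3*K₀*t₀) / 3 with hB₁def
  have hB₁0 : 0 < B₁ := by positivity
  set C₁ : ℝ := lam * K₀ with hC₁def
  have hC₁0 : 0 < C₁ := by positivity
  set a : ℝ := lam * C₁^2 with hadef
  have ha0 : 0 ≤ a := by positivity
  set B₂ : ℝ := lam * B₁ + a with hB₂def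
  have hB₂0 : 0 < B₂ := by positivity
  refine ⟨Real.sqrt B₁ + Real.sqrt (B₂/c) + 1, by positivity, ?_⟩
  intro T hTt₀ AT hvec hATc hvecc hAbd hhbd hlyap pT pT' hderiv hode hterm
  have hsym : Pbarᵀ = Pbar := by
    ext i j
    have := congrFun (congrFun hPbar.1.eq i) j
    simpa [Matrix.conjTranspose_apply] using this
  have hTnn : 0 ≤ T := le_trans ht₀ hTt₀
  set s₀ : ℝ := T - t₀ with hs₀def
  have hs₀0 : 0 ≤ s₀ := by simp [hs₀def]; linarith
  have hs₀T : s₀ ≤ T := by simp [hs₀def]; linarith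
  set W : ℝ → ℝ := fun t => pT t ⬝ᵥ pT t with hWdef
  set V : ℝ → ℝ := fun t => (Pbar *ᵥ pT t) ⬝ᵥ pT t with hVdef
  have hWnn : ∀ t, 0 ≤ W t := fun t => dot_self_nonneg _
  have hq : ∀ t ∈ Icc (0:ℝ) T, pT' t = -(AT t *ᵥ pT t) - hvec t := by
    intro t ht
    have h0 := hode t ht
    rw [add_assoc] at h0
    have := eq_neg_of_add_eq_zero_left h0
    rw [this]; abel
  have hpc : ContinuousOn pT (Icc 0 T) := fun t ht => (hderiv t ht).continuousWithinAt
  have hWc : ContinuousOn W (Icc 0 T) := by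
    have := quad_continuousOn (1 : Matrix (Fin n) (Fin n) ℝ) hpc
    simpa [Matrix.one_mulVec] using this
  have hVc : ContinuousOn V (Icc 0 T) := quad_continuousOn Pbar hpc
  have hWT : W T = 0 := by simp [hWdef, hterm]
  -- enorm bound by W
  have henorm_sq : ∀ t, eucNorm (pT t) * eucNorm (pT t) = W t := fun t => enorm_sq _
  -- Step A : layer bound
  have hlayer : ∀ t ∈ Icc s₀ T, W t ≤ B₁ := by
    have hDsub : Icc s₀ T ⊆ Icc (0:ℝ) T := Icc_subset_Icc hs₀0 le_rfl
    set φ : ℝ → ℝ := fun t => Real.exp (3*K₀*t) * (W t + 1/3) with hφdef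
    set φd : ℝ → ℝ := fun x => Real.exp (3*K₀*x) * (3*K₀) * (W x + 1/3)
      + Real.exp (3*K₀*x) * (pT' x ⬝ᵥ pT x + pT x ⬝ᵥ pT' x) with hφddef
    have hmono : MonotoneOn φ (Icc s₀ T) := by
      apply monotoneOn_of_hasDerivWithinAt_nonneg (convex_Icc _ _)
        (f' := φd)
      · exact ((Real.continuous_exp.comp (continuous_const.mul continuous_id)).continuousOn).mul
          ((hWc.mono hDsub).add continuousOn_const)
      · intro x hx
        have hxD : x ∈ Icc s₀ T := interior_subset hx
        have hx' : x ∈ Icc (0:ℝ) T := hDsub hxD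
        have hWd : HasDerivWithinAt W (pT' x ⬝ᵥ pT x + pT x ⬝ᵥ pT' x)
            (interior (Icc s₀ T)) x := by
          have := quad_hasDeriv (1 : Matrix (Fin n) (Fin n) ℝ) (hderiv x hx')
          simp only [Matrix.one_mulVec] at this
          exact (this.mono (interior_subset.trans hDsub))
        have hexp := (exp_hasDerivAt (3*K₀) x).hasDerivWithinAt
          (s := interior (Icc s₀ T))
        exact hexp.mul (hWd.add_const (1/3))
      · intro x hx
        have hxD : x ∈ Icc s₀ T := interior_subset hx
        have hx' : x ∈ Icc (0:ℝ) T := hDsub hxD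
        have hqx := hq x hx'
        have hAb := hAbd x hx'
        have hhb := hhbd x hx'
        have hdp : pT' x ⬝ᵥ pT x = -((AT x *ᵥ pT x) ⬝ᵥ pT x) - hvec x ⬝ᵥ pT x := by
          rw [hqx, sub_dotProduct, neg_dotProduct]
        have hpd : pT x ⬝ᵥ pT' x = pT' x ⬝ᵥ pT x := dotProduct_comm _ _
        have h1 : (AT x *ᵥ pT x) ⬝ᵥ pT x ≤ K₀ * W x := by
          calc (AT x *ᵥ pT x) ⬝ᵥ pT x ≤ ‖AT x‖ * (eucNorm (pT x) * eucNorm (pT x)) :=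
            mulVec_dot_le _ _ _
          _ = ‖AT x‖ * W x := by rw [henorm_sq]
          _ ≤ K₀ * W x := mul_le_mul_of_nonneg_right hAb (hWnn x)
        have h2 : hvec x ⬝ᵥ pT x ≤ K₀ * ((W x + 1)/2) := by
          have hcs : hvec x ⬝ᵥ pT x ≤ eucNorm (hvec x) * eucNorm (pT x) := dot_le_enorm _ _
          have he : eucNorm (pT x) ≤ (W x + 1)/2 := by
            nlinarith [sq_nonneg (eucNorm (pT x) - 1), henorm_sq x]
          nlinarith [enorm_nonneg' (pT x), enorm_nonneg' (hvec x)]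
        have hexp0 : (0:ℝ) < Real.exp (3*K₀*x) := Real.exp_pos _
        have key : 0 ≤ 3*K₀ * (W x + 1/3) + (pT' x ⬝ᵥ pT x + pT x ⬝ᵥ pT' x) := by
          rw [hpd, hdp]
          nlinarith [hWnn x]
        have : φd x = Real.exp (3*K₀*x) * (3*K₀ * (W x + 1/3)
            + (pT' x ⬝ᵥ pT x + pT x ⬝ᵥ pT' x)) := by
          simp only [hφddef]; ring
        rw [this]
        exact mul_nonneg hexp0.le key
    intro t ht
    have hφ : φ t ≤ φ T := hmono ht ⟨hs₀T, le_rfl⟩ ht.2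
    have hφT : φ T = Real.exp (3*K₀*T) * (1/3) := by simp [hφdef, hWT]
    have hexpT : Real.exp (3*K₀*T) ≤ Real.exp (3*K₀*t) * Real.exp (3*K₀*t₀) := by
      rw [← Real.exp_add]
      apply Real.exp_le_exp.2
      have : T ≤ t + t₀ := by
        have := ht.1
        simp [hs₀def] at this
        linarith
      nlinarith
    have hexpt : (0:ℝ) < Real.exp (3*K₀*t) := Real.exp_pos _
    have : Real.exp (3*K₀*t) * (W t + 1/3) ≤ Real.exp (3*K₀*t) * (Real.exp (3*K₀*t₀) * (1/3)) := by
      calc Real.exp (3*K₀*t) * (W t + 1/3) = φ t := rfl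
      _ ≤ φ T := hφ
      _ = Real.exp (3*K₀*T) * (1/3) := hφT
      _ ≤ Real.exp (3*K₀*t) * (Real.exp (3*K₀*t₀) * (1/3)) := by nlinarith
    have := (mul_le_mul_iff_right₀ hexpt).1 this
    simp only [hB₁def]
    linarith
  -- V at s₀
  have hVs₀ : V s₀ ≤ lam * B₁ := by
    have hWs₀ : W s₀ ≤ B₁ := hlayer s₀ ⟨le_rfl, hs₀T⟩
    have := mulVec_dot_le Pbar (pT s₀) (pT s₀)
    rw [henorm_sq] at this
    calc V s₀ ≤ ‖Pbar‖ * W s₀ := this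
    _ ≤ lam * B₁ := by nlinarith [hWnn s₀, norm_nonneg Pbar]
  -- Step B : Lyapunov bound on [0, s₀]
  have hVbd : ∀ t ∈ Icc (0:ℝ) s₀, V t ≤ B₂ := by
    have hDsub : Icc (0:ℝ) s₀ ⊆ Icc (0:ℝ) T := Icc_subset_Icc le_rfl hs₀T
    set ψ : ℝ → ℝ := fun t => Real.exp (-(1/lam)*t) * (V t - a) with hψdef
    set ψd : ℝ → ℝ := fun x => Real.exp (-(1/lam)*x) * (-(1/lam)) * (V x - a)
      + Real.exp (-(1/lam)*x) * ((Pbar *ᵥ pT' x) ⬝ᵥ pT x + (Pbar *ᵥ pT x) ⬝ᵥ pT' x) with hψddef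
    have hmono : MonotoneOn ψ (Icc (0:ℝ) s₀) := by
      apply monotoneOn_of_hasDerivWithinAt_nonneg (convex_Icc _ _) (f' := ψd)
      · exact ((Real.continuous_exp.comp (continuous_const.mul continuous_id)).continuousOn).mul
          ((hVc.mono hDsub).sub continuousOn_const)
      · intro x hx
        have hxD : x ∈ Icc (0:ℝ) s₀ := interior_subset hx
        have hx' : x ∈ Icc (0:ℝ) T := hDsub hxD
        have hVd : HasDerivWithinAt V ((Pbar *ᵥ pT' x) ⬝ᵥ pT x + (Pbar *ᵥ pT x) ⬝ᵥ pT' x)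
            (interior (Icc (0:ℝ) s₀)) x :=
          (quad_hasDeriv Pbar (hderiv x hx')).mono (interior_subset.trans hDsub)
        have hexp := (exp_hasDerivAt (-(1/lam)) x).hasDerivWithinAt
          (s := interior (Icc (0:ℝ) s₀))
        exact hexp.mul (hVd.sub_const a)
      · intro x hx
        have hxD : x ∈ Icc (0:ℝ) s₀ := interior_subset hx
        have hx' : x ∈ Icc (0:ℝ) T := hDsub hxD
        have hx'' : x ∈ Icc (0:ℝ) (T - t₀) := hxD
        have hqx := hq x hx'
        have hhb := hhbd x hx'
        -- rewrite the derivative of V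
        have hVd2 : (Pbar *ᵥ pT' x) ⬝ᵥ pT x + (Pbar *ᵥ pT x) ⬝ᵥ pT' x
            = 2 * ((Pbar *ᵥ pT' x) ⬝ᵥ pT x) := by
          rw [dot_transpose Pbar (pT x) (pT' x), hsym]; ring
        have hsplit : (Pbar *ᵥ pT' x) ⬝ᵥ pT x
            = -(((Pbar * AT x) *ᵥ pT x) ⬝ᵥ pT x) - (Pbar *ᵥ hvec x) ⬝ᵥ pT x := by
          rw [hqx]
          rw [Matrix.mulVec_sub, Matrix.mulVec_neg, sub_dotProduct, neg_dotProduct,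
            Matrix.mulVec_mulVec]
        have hlyap2 : ((Pbar * AT x) *ᵥ pT x) ⬝ᵥ pT x ≤ -(W x) := by
          have h0 := hlyap x hx'' (pT x)
          rw [Matrix.add_mulVec, add_dotProduct] at h0
          have htr : (((AT x)ᵀ * Pbar) *ᵥ pT x) ⬝ᵥ pT x = ((Pbar * AT x) *ᵥ pT x) ⬝ᵥ pT x := by
            rw [dot_transpose ((AT x)ᵀ * Pbar) (pT x) (pT x), Matrix.transpose_mul,
              Matrix.transpose_transpose, hsym]
          rw [htr] at h0
          have : W x = pT x ⬝ᵥ pT x := rfl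
          linarith
        have hPh : (Pbar *ᵥ hvec x) ⬝ᵥ pT x ≤ C₁ * eucNorm (pT x) := by
          calc (Pbar *ᵥ hvec x) ⬝ᵥ pT x ≤ ‖Pbar‖ * (eucNorm (hvec x) * eucNorm (pT x)) :=
            mulVec_dot_le _ _ _
          _ ≤ C₁ * eucNorm (pT x) := by
            have ep0 : 0 ≤ eucNorm (pT x) := enorm_nonneg' _
            have eh0 : 0 ≤ eucNorm (hvec x) := enorm_nonneg' _
            have h1 : ‖Pbar‖ * (eucNorm (hvec x) * eucNorm (pT x))
                ≤ lam * (eucNorm (hvec x) * eucNorm (pT x)) :=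
              mul_le_mul_of_nonneg_right hPlam (by positivity)
            have h2 : lam * (eucNorm (hvec x) * eucNorm (pT x)) ≤ lam * (K₀ * eucNorm (pT x)) :=
              mul_le_mul_of_nonneg_left (mul_le_mul_of_nonneg_right hhb ep0) hlam0.le
            have h3 : C₁ * eucNorm (pT x) = lam * (K₀ * eucNorm (pT x)) := by
              rw [hC₁def]; ring
            linarith
        have hVW : V x ≤ lam * W x := by
          have := mulVec_dot_le Pbar (pT x) (pT x)
          rw [henorm_sq] at this
          have := mul_le_mul_of_nonneg_right hPlam (hWnn x)
          linarith
        have hkey : V x - a ≤ lam * ((Pbar *ᵥ pT' x) ⬝ᵥ pT x + (Pbar *ᵥ pT x) ⬝ᵥ pT' x) := by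
          rw [hVd2]
          have hVd3 : W x - C₁^2 ≤ 2 * ((Pbar *ᵥ pT' x) ⬝ᵥ pT x) := by
            rw [hsplit]
            nlinarith [henorm_sq x, sq_nonneg (eucNorm (pT x) - C₁)]
          nlinarith
        have hψd : ψd x = Real.exp (-(1/lam)*x)
            * (((Pbar *ᵥ pT' x) ⬝ᵥ pT x + (Pbar *ᵥ pT x) ⬝ᵥ pT' x) - (V x - a) * (1/lam)) := by
          simp only [hψddef]; ring
        rw [hψd]
        apply mul_nonneg (Real.exp_pos _).le
        rw [sub_nonneg]
        rw [mul_one_div, div_le_iff₀ hlam0]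
        nlinarith
    intro t ht
    have hψ : ψ t ≤ ψ s₀ := hmono ht ⟨hs₀0, le_rfl⟩ ht.2
    have hexpt : (0:ℝ) < Real.exp (-(1/lam)*t) := Real.exp_pos _
    have hexps : (0:ℝ) < Real.exp (-(1/lam)*s₀) := Real.exp_pos _
    rcases le_or_gt (V s₀) a with hcase | hcase
    · have hrhs : ψ s₀ ≤ 0 := mul_nonpos_of_nonneg_of_nonpos hexps.le (by linarith)
      have h0 : Real.exp (-(1/lam)*t) * (V t - a) ≤ 0 := le_trans hψ hrhs
      have h1 : V t - a ≤ 0 := by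
        by_contra hpos
        push_neg at hpos
        nlinarith
      have h2 : 0 ≤ lam * B₁ := by positivity
      simp only [hB₂def]
      linarith
    · have hee : Real.exp (-(1/lam)*s₀) ≤ Real.exp (-(1/lam)*t) := by
        apply Real.exp_le_exp.2
        have htt : t ≤ s₀ := ht.2
        have : 0 < 1/lam := by positivity
        nlinarith
      have h1 : ψ s₀ ≤ Real.exp (-(1/lam)*t) * (V s₀ - a) := by
        have : Real.exp (-(1/lam)*s₀) * (V s₀ - a) ≤ Real.exp (-(1/lam)*t) * (V s₀ - a) :=
          mul_le_mul_of_nonneg_right hee (by linarith)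
        exact this
      have h2 : Real.exp (-(1/lam)*t) * (V t - a) ≤ Real.exp (-(1/lam)*t) * (V s₀ - a) :=
        le_trans hψ h1
      have h3 : V t - a ≤ V s₀ - a := (mul_le_mul_iff_right₀ hexpt).1 h2
      simp only [hB₂def]
      linarith
  -- conclusion
  intro t ht
  rcases le_total t s₀ with hts | hst
  · have hVt : V t ≤ B₂ := hVbd t ⟨ht.1, hts⟩
    have hWt : W t ≤ B₂ / c := by
      have := hclower (pT t)
      rw [le_div_iff₀ hc]
      calc W t * c = c * W t := by ring
      _ ≤ V t := by have := hclower (pT t); exact this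
      _ ≤ B₂ := hVt
    have : eucNorm (pT t) ≤ Real.sqrt (B₂/c) := by
      have h1 : eucNorm (pT t) = Real.sqrt (W t) := rfl
      rw [h1]
      exact Real.sqrt_le_sqrt hWt
    have h2 : (0:ℝ) ≤ Real.sqrt B₁ := Real.sqrt_nonneg _
    linarith
  · have hWt : W t ≤ B₁ := hlayer t ⟨hst, ht.2⟩
    have : eucNorm (pT t) ≤ Real.sqrt B₁ := by
      have h1 : eucNorm (pT t) = Real.sqrt (W t) := rfl
      rw [h1]
      exact Real.sqrt_le_sqrt hWt
    have h2 : (0:ℝ) ≤ Real.sqrt (B₂/c) := Real.sqrt_nonneg _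
    linarith
end

section
/- Let δ, K₀, λ > 0. Let P ∈ 𝕊ⁿ with R + DᵀPD ⪰ δI, let p ∈ ℝⁿ, and define c₀ = (1/2)(2⟨p,b⟩ + ⟨Pσ,σ⟩ − ⟨(R + DᵀPD)⁻¹(Bᵀp + DᵀPσ + r), Bᵀp + DᵀPσ + r⟩). Suppose that for each T > 0 we are given continuous P^T : [0,T] → 𝕊ⁿ and p^T : [0,T] → ℝⁿ with R + DᵀP^T(s)D ⪰ δI, ‖P^T(s) − P‖ ≤ K₀ e^{−λ(T−s)}, ‖P^T(s)‖ ≤ K₀, |p^T(s) − p| ≤ K₀ e^{−λ(T−s)}, and |p^T(s)| ≤ K₀ for all s ∈ [0,T]. Define V^T(x) = (1/2)[⟨P^T(0)x, x⟩ + 2⟨p^T(0), x⟩ + ∫₀^T (⟨P^T(s)σ,σ⟩ + 2⟨p^T(s),b⟩ − ⟨[R + DᵀP^T(s)D]⁻¹η(s), η(s)⟩) ds], where η(s) = Bᵀp^T(s) + DᵀP^T(s)σ + r. Then for every x ∈ ℝⁿ, lim_{T→∞} V^T(x)/T = c₀. -/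
open Matrix Set Filter
open scoped Matrix.Norms.L2Operator

namespace Stmt17Aux

variable {k l : ℕ}

lemma eucNorm_nonneg' (v : Fin k → ℝ) : 0 ≤ eucNorm v := Real.sqrt_nonneg _

lemma eucNorm_eq_norm (v : Fin k → ℝ) :
    eucNorm v = ‖(EuclideanSpace.equiv (Fin k) ℝ).symm v‖ := by
  rw [eucNorm, EuclideanSpace.norm_eq]
  congr 1
  rw [dotProduct]
  refine Finset.sum_congr rfl fun i _ => ?_
  rw [Real.norm_eq_abs, sq_abs, sq]
  rfl

lemma eucNorm_eq_zero {v : Fin k → ℝ} (h : eucNorm v = 0) : v = 0 := by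
  rw [eucNorm_eq_norm, norm_eq_zero] at h
  simpa using congrArg (EuclideanSpace.equiv (Fin k) ℝ) h

lemma dot_self_eq (v : Fin k → ℝ) : v ⬝ᵥ v = eucNorm v ^ 2 := by
  rw [eucNorm, Real.sq_sqrt]
  exact Finset.sum_nonneg fun i _ => mul_self_nonneg _

lemma abs_dot_le (v w : Fin k → ℝ) : |v ⬝ᵥ w| ≤ eucNorm v * eucNorm w := by
  have h : v ⬝ᵥ w = inner ℝ ((EuclideanSpace.equiv (Fin k) ℝ).symm v)
      ((EuclideanSpace.equiv (Fin k) ℝ).symm w) := by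
    simp [dotProduct, PiLp.inner_apply, RCLike.inner_apply, mul_comm]
  rw [h, eucNorm_eq_norm, eucNorm_eq_norm]
  exact abs_real_inner_le_norm _ _

lemma dot_le (v w : Fin k → ℝ) : v ⬝ᵥ w ≤ eucNorm v * eucNorm w :=
  (le_abs_self _).trans (abs_dot_le v w)

lemma eucNorm_mulVec_le (A : Matrix (Fin k) (Fin l) ℝ) (v : Fin l → ℝ) :
    eucNorm (A *ᵥ v) ≤ ‖A‖ * eucNorm v := by
  rw [eucNorm_eq_norm, eucNorm_eq_norm]
  exact Matrix.l2_opNorm_mulVec A ((EuclideanSpace.equiv (Fin l) ℝ).symm v)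

lemma eucNorm_add_le (v w : Fin k → ℝ) : eucNorm (v + w) ≤ eucNorm v + eucNorm w := by
  simp only [eucNorm_eq_norm, map_add]
  exact norm_add_le _ _

lemma eucNorm_sub_rev (v w : Fin k → ℝ) : eucNorm (v - w) = eucNorm (w - v) := by
  simp only [eucNorm_eq_norm, map_sub]
  exact norm_sub_rev _ _

lemma eucNorm_sub_le (v w : Fin k → ℝ) : eucNorm (v - w) ≤ eucNorm v + eucNorm w := by
  simp only [eucNorm_eq_norm, map_sub]
  exact norm_sub_le _ _

lemma coercive {δ : ℝ} {M : Matrix (Fin k) (Fin k) ℝ}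
    (h : (M - δ • (1 : Matrix (Fin k) (Fin k) ℝ)).PosSemidef) (x : Fin k → ℝ) :
    δ * eucNorm x ^ 2 ≤ x ⬝ᵥ (M *ᵥ x) := by
  have h2 := h.dotProduct_mulVec_nonneg x
  rw [star_trivial, Matrix.sub_mulVec, dotProduct_sub, Matrix.smul_mulVec,
    Matrix.one_mulVec, dotProduct_smul, smul_eq_mul, dot_self_eq] at h2
  linarith

lemma isHermitian_of_isSymm {M : Matrix (Fin k) (Fin k) ℝ} (h : M.IsSymm) : M.IsHermitian := by
  rwa [Matrix.IsHermitian, Matrix.conjTranspose_eq_transpose_of_trivial]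

lemma posDef_of_coercive {δ : ℝ} (hδ : 0 < δ) {M : Matrix (Fin k) (Fin k) ℝ} (hs : M.IsSymm)
    (h : (M - δ • (1 : Matrix (Fin k) (Fin k) ℝ)).PosSemidef) : M.PosDef := by
  refine Matrix.PosDef.of_dotProduct_mulVec_pos (isHermitian_of_isSymm hs) fun x hx => ?_
  have hcx := coercive h x
  have hex : 0 < eucNorm x := by
    rcases (eucNorm_nonneg' x).lt_or_eq with h' | h'
    · exact h'
    · exact absurd (eucNorm_eq_zero h'.symm) hx
  rw [star_trivial]
  have hp : 0 < δ * eucNorm x ^ 2 := by positivity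
  linarith

lemma det_isUnit_of_coercive {δ : ℝ} (hδ : 0 < δ) {M : Matrix (Fin k) (Fin k) ℝ} (hs : M.IsSymm)
    (h : (M - δ • (1 : Matrix (Fin k) (Fin k) ℝ)).PosSemidef) : IsUnit M.det :=
  isUnit_iff_ne_zero.mpr (posDef_of_coercive hδ hs h).det_pos.ne'

lemma inv_vec_bound {δ : ℝ} (hδ : 0 < δ) {M : Matrix (Fin k) (Fin k) ℝ} (hs : M.IsSymm)
    (h : (M - δ • (1 : Matrix (Fin k) (Fin k) ℝ)).PosSemidef) (y : Fin k → ℝ) :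
    eucNorm (M⁻¹ *ᵥ y) ≤ eucNorm y / δ := by
  have hdet := det_isUnit_of_coercive hδ hs h
  set z := M⁻¹ *ᵥ y with hz
  have hMz : M *ᵥ z = y := by
    rw [hz, Matrix.mulVec_mulVec, Matrix.mul_nonsing_inv _ hdet, Matrix.one_mulVec]
  have h1 : δ * eucNorm z ^ 2 ≤ z ⬝ᵥ y := by
    have := coercive h z; rwa [hMz] at this
  have h2 : z ⬝ᵥ y ≤ eucNorm z * eucNorm y := dot_le z y
  rcases (eucNorm_nonneg' z).lt_or_eq with h' | h'
  · rw [le_div_iff₀ hδ]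
    nlinarith
  · rw [← h']
    exact div_nonneg (eucNorm_nonneg' y) hδ.le

lemma M_isSymm {R0 : Matrix (Fin l) (Fin l) ℝ} (hR : R0.IsSymm)
    (D : Matrix (Fin k) (Fin l) ℝ) {A : Matrix (Fin k) (Fin k) ℝ} (hA : A.IsSymm) :
    (R0 + Dᵀ * A * D).IsSymm := by
  rw [Matrix.IsSymm, Matrix.transpose_add, hR, Matrix.transpose_mul, Matrix.transpose_mul,
    Matrix.transpose_transpose, hA, ← Matrix.mul_assoc]

lemma quad_diff_bound {δ : ℝ} (hδ : 0 < δ)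
    {MA MP : Matrix (Fin k) (Fin k) ℝ} {ηA ηP : Fin k → ℝ} {E εM εη : ℝ}
    (hMAdet : IsUnit MA.det) (hMPdet : IsUnit MP.det)
    (hMAinv : ∀ y, eucNorm (MA⁻¹ *ᵥ y) ≤ eucNorm y / δ)
    (hMPinv : ∀ y, eucNorm (MP⁻¹ *ᵥ y) ≤ eucNorm y / δ)
    (hηA : eucNorm ηA ≤ E) (hηP : eucNorm ηP ≤ E)
    (hεM : 0 ≤ εM) (hM : ∀ v, eucNorm ((MP - MA) *ᵥ v) ≤ εM * eucNorm v)
    (hη : eucNorm (ηA - ηP) ≤ εη) :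
    |((MA⁻¹ *ᵥ ηA) ⬝ᵥ ηA) - ((MP⁻¹ *ᵥ ηP) ⬝ᵥ ηP)|
      ≤ E * (εη / δ + εM * (E / δ) / δ) + (E / δ) * εη := by
  have hE : 0 ≤ E := (eucNorm_nonneg' ηA).trans hηA
  have hεη : 0 ≤ εη := (eucNorm_nonneg' _).trans hη
  set u := MA⁻¹ *ᵥ ηA with hu
  set w := MP⁻¹ *ᵥ ηP with hw
  have hMPw : MP *ᵥ w = ηP := by
    rw [hw, Matrix.mulVec_mulVec, Matrix.mul_nonsing_inv _ hMPdet, Matrix.one_mulVec]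
  have hMAinvMA : ∀ v, MA⁻¹ *ᵥ (MA *ᵥ v) = v := fun v => by
    rw [Matrix.mulVec_mulVec, Matrix.nonsing_inv_mul _ hMAdet, Matrix.one_mulVec]
  have hid : u - w = MA⁻¹ *ᵥ (ηA - ηP) + MA⁻¹ *ᵥ ((MP - MA) *ᵥ w) := by
    rw [Matrix.sub_mulVec, Matrix.mulVec_sub, Matrix.mulVec_sub, hMPw, hMAinvMA]
    abel
  have hwE : eucNorm w ≤ E / δ := (hMPinv ηP).trans (by gcongr)
  have huw : eucNorm (u - w) ≤ εη / δ + εM * (E / δ) / δ := by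
    rw [hid]
    refine (eucNorm_add_le _ _).trans ?_
    have b1 : eucNorm (MA⁻¹ *ᵥ (ηA - ηP)) ≤ εη / δ := (hMAinv _).trans (by gcongr)
    have b2 : eucNorm (MA⁻¹ *ᵥ ((MP - MA) *ᵥ w)) ≤ εM * (E / δ) / δ := by
      refine (hMAinv _).trans ?_
      have h3 : eucNorm ((MP - MA) *ᵥ w) ≤ εM * (E / δ) := (hM w).trans (by gcongr)
      gcongr
    linarith
  have hdecomp : u ⬝ᵥ ηA - w ⬝ᵥ ηP = (u - w) ⬝ᵥ ηA + w ⬝ᵥ (ηA - ηP) := by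
    rw [sub_dotProduct, dotProduct_sub]; ring
  rw [hdecomp]
  refine (abs_add_le _ _).trans ?_
  have b1 : |(u - w) ⬝ᵥ ηA| ≤ (εη / δ + εM * (E / δ) / δ) * E :=
    (abs_dot_le _ _).trans (mul_le_mul huw hηA (eucNorm_nonneg' _) (by positivity))
  have b2 : |w ⬝ᵥ (ηA - ηP)| ≤ (E / δ) * εη :=
    (abs_dot_le _ _).trans (mul_le_mul hwE hη (eucNorm_nonneg' _) (by positivity))
  nlinarith

lemma exp_int_le {lam T : ℝ} (hlam : 0 < lam) (hT : 0 ≤ T) :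
    ∫ s in (0:ℝ)..T, Real.exp (-lam * (T - s)) ≤ 1 / lam := by
  have hder : ∀ s ∈ Set.uIcc (0:ℝ) T,
      HasDerivAt (fun s => Real.exp (-lam * (T - s)) / lam) (Real.exp (-lam * (T - s))) s := by
    intro s _
    have h1 : HasDerivAt (fun s : ℝ => -lam * (T - s)) lam s := by
      have := ((hasDerivAt_id s).const_sub T).const_mul (-lam)
      simpa using this
    have h2 := (h1.exp).div_const lam
    simpa [mul_div_assoc, mul_div_cancel_right₀, hlam.ne'] using h2
  have hcont : IntervalIntegrable (fun s => Real.exp (-lam * (T - s))) MeasureTheory.volume 0 T :=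
    (Real.continuous_exp.comp (by continuity)).intervalIntegrable _ _
  rw [intervalIntegral.integral_eq_sub_of_hasDerivAt hder hcont]
  simp only [sub_self, mul_zero, Real.exp_zero, sub_zero]
  have hpos : 0 < Real.exp (-lam * T) / lam := by positivity
  have h0 : (1:ℝ) / lam - Real.exp (-lam * (T - 0)) / lam ≤ 1 / lam := by
    have : 0 < Real.exp (-lam * (T - 0)) / lam := by positivity
    linarith
  linarith [h0]

lemma integrand_contOn {n m : ℕ} (B D : Matrix (Fin n) (Fin m) ℝ) (σ b : Fin n → ℝ)
    (r : Fin m → ℝ) (R : Matrix (Fin m) (Fin m) ℝ) {T : ℝ}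
    (Pf : ℝ → Matrix (Fin n) (Fin n) ℝ) (pf : ℝ → Fin n → ℝ)
    (hP : ContinuousOn Pf (Icc 0 T)) (hp : ContinuousOn pf (Icc 0 T))
    (hdet : ∀ s ∈ Icc (0:ℝ) T, (R + Dᵀ * Pf s * D).det ≠ 0) :
    ContinuousOn (fun s => (Pf s *ᵥ σ) ⬝ᵥ σ + 2 * (pf s ⬝ᵥ b)
      - ((R + Dᵀ * Pf s * D)⁻¹ *ᵥ (Bᵀ *ᵥ pf s + Dᵀ *ᵥ (Pf s *ᵥ σ) + r)) ⬝ᵥ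
        (Bᵀ *ᵥ pf s + Dᵀ *ᵥ (Pf s *ᵥ σ) + r)) (Icc 0 T) := by
  rw [continuousOn_iff_continuous_restrict] at hP hp ⊢
  have hM : Continuous fun s : Icc (0:ℝ) T => R + Dᵀ * Pf s * D :=
    continuous_const.add ((continuous_const.matrix_mul hP).matrix_mul continuous_const)
  have hdet' : ∀ s : Icc (0:ℝ) T, (R + Dᵀ * Pf s * D).det ≠ 0 := fun s => hdet s s.2
  have hMinv : Continuous fun s : Icc (0:ℝ) T => (R + Dᵀ * Pf s * D)⁻¹ := by
    have heq : (fun s : Icc (0:ℝ) T => (R + Dᵀ * Pf s * D)⁻¹)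
        = fun s : Icc (0:ℝ) T =>
            ((R + Dᵀ * Pf s * D).det)⁻¹ • (R + Dᵀ * Pf s * D).adjugate := by
      funext s; rw [Matrix.inv_def, Ring.inverse_eq_inv]
    rw [heq]
    exact (hM.matrix_det.inv₀ hdet').smul hM.matrix_adjugate
  have hηc : Continuous fun s : Icc (0:ℝ) T => Bᵀ *ᵥ pf s + Dᵀ *ᵥ (Pf s *ᵥ σ) + r :=
    ((continuous_const.matrix_mulVec hp).add
      (continuous_const.matrix_mulVec (hP.matrix_mulVec continuous_const))).add continuous_const
  exact (((hP.matrix_mulVec continuous_const).dotProduct continuous_const).add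
      (continuous_const.mul (hp.dotProduct continuous_const))).sub
    ((hMinv.matrix_mulVec hηc).dotProduct hηc)

end Stmt17Aux

set_option maxHeartbeats 1000000


/-- the long-run average of the finite-horizon value function converges to
the cell-problem constant `c₀`: `lim_{T→∞} V^T(x)/T = c₀` for every `x`. -/
theorem stmt17 {n m : ℕ}
    (B D : Matrix (Fin n) (Fin m) ℝ) (b σ : Fin n → ℝ) (r : Fin m → ℝ)
    (R : Matrix (Fin m) (Fin m) ℝ) (hR : R.IsSymm)
    (δ K₀ lam : ℝ) (hδ : 0 < δ) (hK₀ : 0 < K₀) (hlam : 0 < lam)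
    (P : Matrix (Fin n) (Fin n) ℝ) (hPsymm : P.IsSymm)
    (hPδ : (R + Dᵀ * P * D - δ • (1 : Matrix (Fin m) (Fin m) ℝ)).PosSemidef)
    (p : Fin n → ℝ)
    (c₀ : ℝ)
    (hc₀ : c₀ = (1 / 2) * (2 * (p ⬝ᵥ b) + (P *ᵥ σ) ⬝ᵥ σ
      - ((R + Dᵀ * P * D)⁻¹ *ᵥ (Bᵀ *ᵥ p + Dᵀ *ᵥ (P *ᵥ σ) + r)) ⬝ᵥ
          (Bᵀ *ᵥ p + Dᵀ *ᵥ (P *ᵥ σ) + r)))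
    (PT : ℝ → ℝ → Matrix (Fin n) (Fin n) ℝ) (pT : ℝ → ℝ → Fin n → ℝ)
    (hPTcont : ∀ T > (0 : ℝ), ContinuousOn (PT T) (Icc 0 T))
    (hpTcont : ∀ T > (0 : ℝ), ContinuousOn (pT T) (Icc 0 T))
    (hPTsymm : ∀ T > (0 : ℝ), ∀ s ∈ Icc (0 : ℝ) T, (PT T s).IsSymm)
    (hPTδ : ∀ T > (0 : ℝ), ∀ s ∈ Icc (0 : ℝ) T,
      (R + Dᵀ * PT T s * D - δ • (1 : Matrix (Fin m) (Fin m) ℝ)).PosSemidef)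
    (hPTbd : ∀ T > (0 : ℝ), ∀ s ∈ Icc (0 : ℝ) T, ‖PT T s‖ ≤ K₀)
    (hpTbd : ∀ T > (0 : ℝ), ∀ s ∈ Icc (0 : ℝ) T, eucNorm (pT T s) ≤ K₀)
    (hPTconv : ∀ T > (0 : ℝ), ∀ s ∈ Icc (0 : ℝ) T,
      ‖PT T s - P‖ ≤ K₀ * Real.exp (-lam * (T - s)))
    (hpTconv : ∀ T > (0 : ℝ), ∀ s ∈ Icc (0 : ℝ) T,
      eucNorm (pT T s - p) ≤ K₀ * Real.exp (-lam * (T - s)))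
    (η : ℝ → ℝ → Fin m → ℝ)
    (hη : ∀ T s, η T s = Bᵀ *ᵥ pT T s + Dᵀ *ᵥ (PT T s *ᵥ σ) + r)
    (VT : ℝ → (Fin n → ℝ) → ℝ)
    (hVT : ∀ T : ℝ, ∀ x : Fin n → ℝ, VT T x = (1 / 2) * ((PT T 0 *ᵥ x) ⬝ᵥ x
      + 2 * (pT T 0 ⬝ᵥ x)
      + ∫ s in (0 : ℝ)..T, ((PT T s *ᵥ σ) ⬝ᵥ σ + 2 * (pT T s ⬝ᵥ b)
          - ((R + Dᵀ * PT T s * D)⁻¹ *ᵥ η T s) ⬝ᵥ η T s))) :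
    ∀ x : Fin n → ℝ, Tendsto (fun T : ℝ => VT T x / T) atTop (nhds c₀) := by
  intro x
  -- abbreviations
  set ηP := Bᵀ *ᵥ p + Dᵀ *ᵥ (P *ᵥ σ) + r with hηPdef
  set G := 2 * (p ⬝ᵥ b) + (P *ᵥ σ) ⬝ᵥ σ
      - ((R + Dᵀ * P * D)⁻¹ *ᵥ ηP) ⬝ᵥ ηP with hGdef
  have hc₀G : c₀ = G / 2 := by rw [hc₀, hGdef]; ring
  have hMPs : (R + Dᵀ * P * D).IsSymm := Stmt17Aux.M_isSymm hR D hPsymm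
  have hMPdet : IsUnit (R + Dᵀ * P * D).det := Stmt17Aux.det_isUnit_of_coercive hδ hMPs hPδ
  have hMPinv := Stmt17Aux.inv_vec_bound hδ hMPs hPδ
  -- nonnegativity of basic constants
  have hσn : (0:ℝ) ≤ eucNorm σ := Stmt17Aux.eucNorm_nonneg' σ
  have hbn : (0:ℝ) ≤ eucNorm b := Stmt17Aux.eucNorm_nonneg' b
  have hxn : (0:ℝ) ≤ eucNorm x := Stmt17Aux.eucNorm_nonneg' x
  -- bounds on P and p
  have h11 : (1:ℝ) ∈ Icc (0:ℝ) 1 := ⟨zero_le_one, le_refl 1⟩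
  have hPbd : ‖P‖ ≤ 2 * K₀ := by
    have h1 := hPTbd 1 one_pos 1 h11
    have h2 := hPTconv 1 one_pos 1 h11
    rw [sub_self, mul_zero, Real.exp_zero, mul_one] at h2
    have h3 : ‖P‖ ≤ ‖PT 1 1‖ + ‖PT 1 1 - P‖ := by
      have := norm_sub_le (PT 1 1) (PT 1 1 - P)
      simpa using this
    linarith
  have hpbd : eucNorm p ≤ 2 * K₀ := by
    have h1 := hpTbd 1 one_pos 1 h11
    have h2 := hpTconv 1 one_pos 1 h11
    rw [sub_self, mul_zero, Real.exp_zero, mul_one] at h2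
    have h3 : eucNorm p ≤ eucNorm (pT 1 1) + eucNorm (pT 1 1 - p) := by
      have := Stmt17Aux.eucNorm_sub_le (pT 1 1) (pT 1 1 - p)
      rwa [sub_sub_cancel] at this
    linarith
  -- the uniform bound on the "eta" vectors
  set E := ‖Bᵀ‖ * (2 * K₀) + ‖Dᵀ‖ * ((2 * K₀) * eucNorm σ) + eucNorm r with hEdef
  have hηbd : ∀ (A : Matrix (Fin n) (Fin n) ℝ) (q : Fin n → ℝ),
      ‖A‖ ≤ 2 * K₀ → eucNorm q ≤ 2 * K₀ →
      eucNorm (Bᵀ *ᵥ q + Dᵀ *ᵥ (A *ᵥ σ) + r) ≤ E := by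
    intro A q hA hq
    refine (Stmt17Aux.eucNorm_add_le _ _).trans ?_
    have b1 : eucNorm (Bᵀ *ᵥ q) ≤ ‖Bᵀ‖ * (2 * K₀) :=
      (Stmt17Aux.eucNorm_mulVec_le _ _).trans (mul_le_mul_of_nonneg_left hq (norm_nonneg _))
    have b2 : eucNorm (Dᵀ *ᵥ (A *ᵥ σ)) ≤ ‖Dᵀ‖ * ((2 * K₀) * eucNorm σ) := by
      refine (Stmt17Aux.eucNorm_mulVec_le _ _).trans (mul_le_mul_of_nonneg_left ?_ (norm_nonneg _))
      exact (Stmt17Aux.eucNorm_mulVec_le _ _).trans (mul_le_mul_of_nonneg_right hA hσn)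
    have b3 := (Stmt17Aux.eucNorm_add_le (Bᵀ *ᵥ q) (Dᵀ *ᵥ (A *ᵥ σ)))
    rw [hEdef]
    linarith
  have hηPbd : eucNorm ηP ≤ E := hηbd P p hPbd hpbd
  have hE0 : 0 ≤ E := (Stmt17Aux.eucNorm_nonneg' ηP).trans hηPbd
  set Lc := ‖Bᵀ‖ + ‖Dᵀ‖ * eucNorm σ with hLcdef
  have hLc0 : 0 ≤ Lc := by
    rw [hLcdef]; positivity
  set C := eucNorm σ ^ 2 + 2 * eucNorm b + (2 * E * Lc / δ + ‖Dᵀ‖ * ‖D‖ * E ^ 2 / δ ^ 2)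
    with hCdef
  have hC0 : 0 ≤ C := by
    have c1 : (0:ℝ) ≤ eucNorm σ ^ 2 := sq_nonneg _
    have c2 : (0:ℝ) ≤ 2 * E * Lc / δ := by positivity
    have c3 : (0:ℝ) ≤ ‖Dᵀ‖ * ‖D‖ * E ^ 2 / δ ^ 2 := by positivity
    rw [hCdef]; linarith
  -- pointwise bound on the integrand
  have key : ∀ T, 0 < T → ∀ s ∈ Icc (0:ℝ) T,
      |((PT T s *ᵥ σ) ⬝ᵥ σ + 2 * (pT T s ⬝ᵥ b)
          - ((R + Dᵀ * PT T s * D)⁻¹ *ᵥ η T s) ⬝ᵥ η T s) - G|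
        ≤ C * (K₀ * Real.exp (-lam * (T - s))) := by
    intro T hT s hs
    set ε := K₀ * Real.exp (-lam * (T - s)) with hεdef
    have hε0 : 0 ≤ ε := by rw [hεdef]; positivity
    have hAP : ‖PT T s - P‖ ≤ ε := hPTconv T hT s hs
    have hqp : eucNorm (pT T s - p) ≤ ε := hpTconv T hT s hs
    have hAbd2 : ‖PT T s‖ ≤ 2 * K₀ := (hPTbd T hT s hs).trans (by linarith)
    have hqbd2 : eucNorm (pT T s) ≤ 2 * K₀ := (hpTbd T hT s hs).trans (by linarith)
    have hMAs : (R + Dᵀ * PT T s * D).IsSymm := Stmt17Aux.M_isSymm hR D (hPTsymm T hT s hs)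
    have hMAdet : IsUnit (R + Dᵀ * PT T s * D).det :=
      Stmt17Aux.det_isUnit_of_coercive hδ hMAs (hPTδ T hT s hs)
    have hMAinv := Stmt17Aux.inv_vec_bound hδ hMAs (hPTδ T hT s hs)
    have hηA : eucNorm (η T s) ≤ E := by rw [hη]; exact hηbd (PT T s) (pT T s) hAbd2 hqbd2
    -- term 1
    have t1 : |(PT T s *ᵥ σ) ⬝ᵥ σ - (P *ᵥ σ) ⬝ᵥ σ| ≤ eucNorm σ ^ 2 * ε := by
      rw [← sub_dotProduct, ← Matrix.sub_mulVec]
      refine (Stmt17Aux.abs_dot_le _ _).trans ?_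
      have h1 : eucNorm ((PT T s - P) *ᵥ σ) ≤ ε * eucNorm σ :=
        (Stmt17Aux.eucNorm_mulVec_le _ _).trans (mul_le_mul_of_nonneg_right hAP hσn)
      calc eucNorm ((PT T s - P) *ᵥ σ) * eucNorm σ ≤ (ε * eucNorm σ) * eucNorm σ :=
            mul_le_mul_of_nonneg_right h1 hσn
        _ = eucNorm σ ^ 2 * ε := by ring
    -- term 2
    have t2 : |2 * (pT T s ⬝ᵥ b) - 2 * (p ⬝ᵥ b)| ≤ 2 * eucNorm b * ε := by
      rw [← mul_sub, ← sub_dotProduct, abs_mul, abs_two]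
      have h1 := Stmt17Aux.abs_dot_le (pT T s - p) b
      have h2 : eucNorm (pT T s - p) * eucNorm b ≤ ε * eucNorm b :=
        mul_le_mul_of_nonneg_right hqp hbn
      nlinarith
    -- term 3
    have hMdiff : ∀ v, eucNorm (((R + Dᵀ * P * D) - (R + Dᵀ * PT T s * D)) *ᵥ v)
        ≤ (‖Dᵀ‖ * ‖D‖ * ε) * eucNorm v := by
      intro v
      have hMM : (R + Dᵀ * P * D) - (R + Dᵀ * PT T s * D) = Dᵀ * (P - PT T s) * D := by
        rw [Matrix.mul_sub, Matrix.sub_mul]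
        abel
      rw [hMM, ← Matrix.mulVec_mulVec, ← Matrix.mulVec_mulVec]
      refine (Stmt17Aux.eucNorm_mulVec_le _ _).trans ?_
      have h2 : eucNorm ((P - PT T s) *ᵥ (D *ᵥ v)) ≤ ε * (‖D‖ * eucNorm v) := by
        refine (Stmt17Aux.eucNorm_mulVec_le _ _).trans ?_
        have h3 : eucNorm (D *ᵥ v) ≤ ‖D‖ * eucNorm v := Stmt17Aux.eucNorm_mulVec_le _ _
        have h4 : ‖P - PT T s‖ ≤ ε := by rwa [norm_sub_rev]
        exact mul_le_mul h4 h3 (Stmt17Aux.eucNorm_nonneg' _) hε0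
      calc ‖Dᵀ‖ * eucNorm ((P - PT T s) *ᵥ (D *ᵥ v)) ≤ ‖Dᵀ‖ * (ε * (‖D‖ * eucNorm v)) :=
            mul_le_mul_of_nonneg_left h2 (norm_nonneg _)
        _ = (‖Dᵀ‖ * ‖D‖ * ε) * eucNorm v := by ring
    have hηdiff : eucNorm (η T s - ηP) ≤ Lc * ε := by
      rw [hη]
      have heq : (Bᵀ *ᵥ pT T s + Dᵀ *ᵥ (PT T s *ᵥ σ) + r) - ηP
          = Bᵀ *ᵥ (pT T s - p) + Dᵀ *ᵥ ((PT T s - P) *ᵥ σ) := by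
        rw [hηPdef, Matrix.mulVec_sub, Matrix.sub_mulVec, Matrix.mulVec_sub]
        abel
      rw [heq]
      refine (Stmt17Aux.eucNorm_add_le _ _).trans ?_
      have b1 : eucNorm (Bᵀ *ᵥ (pT T s - p)) ≤ ‖Bᵀ‖ * ε :=
        (Stmt17Aux.eucNorm_mulVec_le _ _).trans (mul_le_mul_of_nonneg_left hqp (norm_nonneg _))
      have b2 : eucNorm (Dᵀ *ᵥ ((PT T s - P) *ᵥ σ)) ≤ ‖Dᵀ‖ * (ε * eucNorm σ) := by
        refine (Stmt17Aux.eucNorm_mulVec_le _ _).trans (mul_le_mul_of_nonneg_left ?_ (norm_nonneg _))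
        exact (Stmt17Aux.eucNorm_mulVec_le _ _).trans (mul_le_mul_of_nonneg_right hAP hσn)
      have hb2' : ‖Dᵀ‖ * (ε * eucNorm σ) = ‖Dᵀ‖ * eucNorm σ * ε := by ring
      rw [hLcdef]
      have hgoal : ‖Bᵀ‖ * ε + ‖Dᵀ‖ * eucNorm σ * ε = (‖Bᵀ‖ + ‖Dᵀ‖ * eucNorm σ) * ε := by ring
      linarith
    have hεM0 : 0 ≤ ‖Dᵀ‖ * ‖D‖ * ε := by positivity
    have t3 := Stmt17Aux.quad_diff_bound hδ hMAdet hMPdet hMAinv hMPinv hηA hηPbd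
      hεM0 hMdiff hηdiff
    have hrw : E * ((Lc * ε) / δ + (‖Dᵀ‖ * ‖D‖ * ε) * (E / δ) / δ) + (E / δ) * (Lc * ε)
        = (2 * E * Lc / δ + ‖Dᵀ‖ * ‖D‖ * E ^ 2 / δ ^ 2) * ε := by
      field_simp
      ring
    rw [hrw] at t3
    have hsplit : ((PT T s *ᵥ σ) ⬝ᵥ σ + 2 * (pT T s ⬝ᵥ b)
          - ((R + Dᵀ * PT T s * D)⁻¹ *ᵥ η T s) ⬝ᵥ η T s) - G
        = ((PT T s *ᵥ σ) ⬝ᵥ σ - (P *ᵥ σ) ⬝ᵥ σ) + (2 * (pT T s ⬝ᵥ b) - 2 * (p ⬝ᵥ b))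
          + -((((R + Dᵀ * PT T s * D)⁻¹ *ᵥ η T s) ⬝ᵥ η T s)
              - (((R + Dᵀ * P * D)⁻¹ *ᵥ ηP) ⬝ᵥ ηP)) := by
      rw [hGdef]; ring
    rw [hsplit]
    have habs := abs_add_three ((PT T s *ᵥ σ) ⬝ᵥ σ - (P *ᵥ σ) ⬝ᵥ σ)
      (2 * (pT T s ⬝ᵥ b) - 2 * (p ⬝ᵥ b))
      (-((((R + Dᵀ * PT T s * D)⁻¹ *ᵥ η T s) ⬝ᵥ η T s)
          - (((R + Dᵀ * P * D)⁻¹ *ᵥ ηP) ⬝ᵥ ηP)))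
    rw [abs_neg] at habs
    have hCe : C * ε = eucNorm σ ^ 2 * ε + 2 * eucNorm b * ε
        + (2 * E * Lc / δ + ‖Dᵀ‖ * ‖D‖ * E ^ 2 / δ ^ 2) * ε := by
      rw [hCdef]; ring
    rw [hCe]
    linarith
  -- the global bound for each T > 0
  set Kc := (1/2) * (K₀ * eucNorm x ^ 2 + 2 * (K₀ * eucNorm x) + C * K₀ / lam) with hKcdef
  have main : ∀ T, 0 < T → |VT T x - T * c₀| ≤ Kc := by
    intro T hT
    have h0T : (0:ℝ) ∈ Icc (0:ℝ) T := ⟨le_refl 0, hT.le⟩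
    -- continuity of the integrand
    have hgeq : (fun s => (PT T s *ᵥ σ) ⬝ᵥ σ + 2 * (pT T s ⬝ᵥ b)
        - ((R + Dᵀ * PT T s * D)⁻¹ *ᵥ η T s) ⬝ᵥ η T s)
        = fun s => (PT T s *ᵥ σ) ⬝ᵥ σ + 2 * (pT T s ⬝ᵥ b)
          - ((R + Dᵀ * PT T s * D)⁻¹ *ᵥ (Bᵀ *ᵥ pT T s + Dᵀ *ᵥ (PT T s *ᵥ σ) + r)) ⬝ᵥ
            (Bᵀ *ᵥ pT T s + Dᵀ *ᵥ (PT T s *ᵥ σ) + r) := by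
      funext s; rw [hη]
    have hgcont : ContinuousOn (fun s => (PT T s *ᵥ σ) ⬝ᵥ σ + 2 * (pT T s ⬝ᵥ b)
        - ((R + Dᵀ * PT T s * D)⁻¹ *ᵥ η T s) ⬝ᵥ η T s) (Icc 0 T) := by
      rw [hgeq]
      exact Stmt17Aux.integrand_contOn B D σ b r R (PT T) (pT T) (hPTcont T hT) (hpTcont T hT)
        (fun s hs => (Stmt17Aux.posDef_of_coercive hδ
          (Stmt17Aux.M_isSymm hR D (hPTsymm T hT s hs)) (hPTδ T hT s hs)).det_pos.ne')
    have hgint : IntervalIntegrable (fun s => (PT T s *ᵥ σ) ⬝ᵥ σ + 2 * (pT T s ⬝ᵥ b)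
        - ((R + Dᵀ * PT T s * D)⁻¹ *ᵥ η T s) ⬝ᵥ η T s) MeasureTheory.volume 0 T := by
      apply ContinuousOn.intervalIntegrable
      rwa [uIcc_of_le hT.le]
    -- bound on the integral part
    have hint1 : |(∫ s in (0:ℝ)..T, ((PT T s *ᵥ σ) ⬝ᵥ σ + 2 * (pT T s ⬝ᵥ b)
        - ((R + Dᵀ * PT T s * D)⁻¹ *ᵥ η T s) ⬝ᵥ η T s)) - T * G| ≤ C * K₀ / lam := by
      have hsub : (∫ s in (0:ℝ)..T, ((PT T s *ᵥ σ) ⬝ᵥ σ + 2 * (pT T s ⬝ᵥ b)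
          - ((R + Dᵀ * PT T s * D)⁻¹ *ᵥ η T s) ⬝ᵥ η T s)) - T * G
          = ∫ s in (0:ℝ)..T, (((PT T s *ᵥ σ) ⬝ᵥ σ + 2 * (pT T s ⬝ᵥ b)
            - ((R + Dᵀ * PT T s * D)⁻¹ *ᵥ η T s) ⬝ᵥ η T s) - G) := by
        rw [intervalIntegral.integral_sub hgint intervalIntegrable_const,
          intervalIntegral.integral_const]
        simp [smul_eq_mul]
      rw [hsub, ← Real.norm_eq_abs]
      have hbd : ∀ᵐ t ∂(MeasureTheory.volume.restrict (Set.uIoc (0:ℝ) T)),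
          ‖((PT T t *ᵥ σ) ⬝ᵥ σ + 2 * (pT T t ⬝ᵥ b)
            - ((R + Dᵀ * PT T t * D)⁻¹ *ᵥ η T t) ⬝ᵥ η T t) - G‖
            ≤ C * (K₀ * Real.exp (-lam * (T - t))) := by
        rw [uIoc_of_le hT.le]
        filter_upwards [MeasureTheory.ae_restrict_mem measurableSet_Ioc] with t ht
        rw [Real.norm_eq_abs]
        exact key T hT t ⟨ht.1.le, ht.2⟩
      have hintb : IntervalIntegrable (fun t => C * (K₀ * Real.exp (-lam * (T - t))))
          MeasureTheory.volume 0 T := by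
        apply Continuous.intervalIntegrable
        continuity
      refine (intervalIntegral.norm_integral_le_of_norm_le hT.le
        (by rw [uIoc_of_le hT.le] at hbd; exact (MeasureTheory.ae_restrict_iff' measurableSet_Ioc).mp hbd) hintb).trans ?_
      have hik : (∫ t in (0:ℝ)..T, C * (K₀ * Real.exp (-lam * (T - t))))
          = C * K₀ * ∫ t in (0:ℝ)..T, Real.exp (-lam * (T - t)) := by
        rw [← intervalIntegral.integral_const_mul]
        congr 1
        funext t
        ring
      have hexpnn : 0 ≤ ∫ t in (0:ℝ)..T, Real.exp (-lam * (T - t)) :=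
        intervalIntegral.integral_nonneg hT.le (fun t _ => (Real.exp_pos _).le)
      rw [hik]
      calc C * K₀ * ∫ t in (0:ℝ)..T, Real.exp (-lam * (T - t))
          ≤ C * K₀ * (1 / lam) :=
            mul_le_mul_of_nonneg_left (Stmt17Aux.exp_int_le hlam hT.le)
              (mul_nonneg hC0 hK₀.le)
        _ = C * K₀ / lam := by ring
    -- boundary terms
    have hq1 : |(PT T 0 *ᵥ x) ⬝ᵥ x| ≤ K₀ * eucNorm x ^ 2 := by
      refine (Stmt17Aux.abs_dot_le _ _).trans ?_
      have h1 : eucNorm (PT T 0 *ᵥ x) ≤ K₀ * eucNorm x :=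
        (Stmt17Aux.eucNorm_mulVec_le _ _).trans
          (mul_le_mul_of_nonneg_right (hPTbd T hT 0 h0T) hxn)
      calc eucNorm (PT T 0 *ᵥ x) * eucNorm x ≤ (K₀ * eucNorm x) * eucNorm x :=
            mul_le_mul_of_nonneg_right h1 hxn
        _ = K₀ * eucNorm x ^ 2 := by ring
    have hq2 : |pT T 0 ⬝ᵥ x| ≤ K₀ * eucNorm x :=
      (Stmt17Aux.abs_dot_le _ _).trans
        (mul_le_mul_of_nonneg_right (hpTbd T hT 0 h0T) hxn)
    -- assemble
    rw [hVT]
    have hTc : T * c₀ = (1/2) * (T * G) := by rw [hc₀G]; ring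
    rw [hTc]
    have hre : (1/2) * ((PT T 0 *ᵥ x) ⬝ᵥ x + 2 * (pT T 0 ⬝ᵥ x)
        + ∫ s in (0:ℝ)..T, ((PT T s *ᵥ σ) ⬝ᵥ σ + 2 * (pT T s ⬝ᵥ b)
          - ((R + Dᵀ * PT T s * D)⁻¹ *ᵥ η T s) ⬝ᵥ η T s)) - (1/2) * (T * G)
        = (1/2) * ((PT T 0 *ᵥ x) ⬝ᵥ x + 2 * (pT T 0 ⬝ᵥ x)
          + ((∫ s in (0:ℝ)..T, ((PT T s *ᵥ σ) ⬝ᵥ σ + 2 * (pT T s ⬝ᵥ b)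
            - ((R + Dᵀ * PT T s * D)⁻¹ *ᵥ η T s) ⬝ᵥ η T s)) - T * G)) := by
      ring
    rw [hre, abs_mul]
    have h12 : |(1:ℝ)/2| = 1/2 := by norm_num
    rw [h12, hKcdef]
    have habs := abs_add_three ((PT T 0 *ᵥ x) ⬝ᵥ x) (2 * (pT T 0 ⬝ᵥ x))
      ((∫ s in (0:ℝ)..T, ((PT T s *ᵥ σ) ⬝ᵥ σ + 2 * (pT T s ⬝ᵥ b)
        - ((R + Dᵀ * PT T s * D)⁻¹ *ᵥ η T s) ⬝ᵥ η T s)) - T * G)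
    have habs2 : |2 * (pT T 0 ⬝ᵥ x)| = 2 * |pT T 0 ⬝ᵥ x| := by
      rw [abs_mul, abs_two]
    rw [habs2] at habs
    have hfinal : |(PT T 0 *ᵥ x) ⬝ᵥ x + 2 * (pT T 0 ⬝ᵥ x)
        + ((∫ s in (0:ℝ)..T, ((PT T s *ᵥ σ) ⬝ᵥ σ + 2 * (pT T s ⬝ᵥ b)
          - ((R + Dᵀ * PT T s * D)⁻¹ *ᵥ η T s) ⬝ᵥ η T s)) - T * G)|
        ≤ K₀ * eucNorm x ^ 2 + 2 * (K₀ * eucNorm x) + C * K₀ / lam := by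
      linarith
    linarith
  -- conclude via squeeze
  have h0 : Tendsto (fun T : ℝ => Kc / T) atTop (nhds 0) :=
    tendsto_const_nhds.div_atTop tendsto_id
  have h1 : Tendsto (fun T : ℝ => VT T x / T - c₀) atTop (nhds 0) := by
    refine squeeze_zero_norm' ?_ h0
    filter_upwards [eventually_gt_atTop (0:ℝ)] with T hT
    have hb := main T hT
    rw [Real.norm_eq_abs]
    have hdiv : VT T x / T - c₀ = (VT T x - T * c₀) / T := by
      field_simp
    rw [hdiv, abs_div, abs_of_pos hT]
    exact div_le_div_of_nonneg_right hb hT.le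
  have h2 := h1.add (tendsto_const_nhds (x := c₀))
  simp only [sub_add_cancel, zero_add] at h2
  exact h2
end
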